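/- arXiv:2107.03445 — 5 statements merged into one kernel-verified Lean document; each statement's English description precedes it below -/
import Mathlib

section
/- Let s > 0 be real and let v be a 2π-periodic real-valued trigonometric polynomial with zero mean. Then the following identity holds: −(2/π)∫_{0}^{2π} (|D|^{s+1/2} v)·(|D|^{s+1/2}(1+|D|)^{−1}∂_x(v²)) dx = (2/π)∫_{0}^{2π} (|D|^{s} v)² ∂_x v dx − (4/π)∫_{0}^{2π} (|D|^{s} v)·( |D|^{s}(v ∂_x v) − v·|D|^{s}∂_x v ) dx + (2/π)∫_{0}^{2π} (|D|^{s} v)·( ∂_x |D|^{s}(1+|D|)^{−1}(v²) ) dx. (This is the decomposition of the time derivative of the H^{s+1/2} norm along the truncated BBM flow into the three terms F_{1,N}, F_{2,N}, F_{3,N}.) -/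
open MeasureTheory Real

/-- The function on the torus with Fourier coefficients `c`:
`x ↦ Σ_n c(n) e^{inx}`. -/
noncomputable def toFun (c : ℤ → ℂ) : ℝ → ℂ :=
  fun x => ∑' n : ℤ, c n * Complex.exp (Complex.I * n * x)

/-- The Fourier multiplier `|D|^σ` acting on Fourier coefficients. -/
noncomputable def absD (σ : ℝ) (c : ℤ → ℂ) : ℤ → ℂ :=
  fun n => ((|(n : ℝ)| ^ σ : ℝ) : ℂ) * c n

/-- The Fourier multiplier `(1+|D|)⁻¹` acting on Fourier coefficients. -/
noncomputable def invD (c : ℤ → ℂ) : ℤ → ℂ :=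
  fun n => c n / (((1 + |(n : ℝ)|) : ℝ) : ℂ)

/-- The derivative `∂_x` acting on Fourier coefficients. -/
noncomputable def derivOp (c : ℤ → ℂ) : ℤ → ℂ :=
  fun n => (n : ℂ) * Complex.I * c n

/-- Convolution of Fourier coefficients (coefficients of the pointwise product). -/
noncomputable def convC (c d : ℤ → ℂ) : ℤ → ℂ :=
  fun m => ∑' k : ℤ, c k * d (m - k)


/-! With `u = |D|^s v`, the multipliers of the first and third integrals add up because
`|n|^(2s+1)/(1+|n|) + |n|^(2s)/(1+|n|) = |n|^(2s)` (at `n = 0` both sides carry the factor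
`n` of `∂_x`), so these two terms combine into the pairing of `u` with
`|D|^s ∂_x(v²) = 2|D|^s(v v_x)`.
This cancels the commutator's first half, and what is left is
`∫ u² v_x + 2 ∫ u v u_x = ∫ ∂_x(u² v) = 0` by periodicity. Multipliers are moved across
integrals through Parseval's identity `∫ f g = 2π Σ f̂(n) ĝ(-n)`. -/

open Function
open scoped Pointwise

namespace Function.HasFiniteSupport

variable {a b : ℤ → ℂ}

lemma absD (σ : ℝ) (ha : a.HasFiniteSupport) : (_root_.absD σ a).HasFiniteSupport :=
  ha.subset (support_mul_subset_right _ _)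

lemma invD (ha : a.HasFiniteSupport) : (_root_.invD a).HasFiniteSupport :=
  ha.subset ((support_div _ _).trans_subset Set.inter_subset_left)

lemma derivOp (ha : a.HasFiniteSupport) : (_root_.derivOp a).HasFiniteSupport :=
  ha.subset (support_mul_subset_right _ _)

lemma support_convC_subset : support (convC a b) ⊆ support a + support b := by
  intro m hm
  obtain ⟨k, hk⟩ : ∃ k, a k * b (m - k) ≠ 0 := by
    by_contra! h
    exact hm (by simp only [convC, h, tsum_zero])
  exact ⟨k, left_ne_zero_of_mul hk, m - k, right_ne_zero_of_mul hk, add_sub_cancel k m⟩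

lemma convC (ha : a.HasFiniteSupport) (hb : b.HasFiniteSupport) :
    (_root_.convC a b).HasFiniteSupport :=
  (Set.Finite.add ha hb).subset support_convC_subset

lemma of_forall_lt_abs {M : Type*} [Zero M] {f : ℤ → M} (N : ℕ)
    (h : ∀ n : ℤ, (N : ℤ) < |n| → f n = 0) : f.HasFiniteSupport := by
  refine (Set.finite_Icc (-(N : ℤ)) N).subset fun n hn => ?_
  by_contra hn'
  exact hn (h n (lt_abs.2 (by simp only [Set.mem_Icc, not_and_or, not_le] at hn'; omega)))

end Function.HasFiniteSupport

section TrigonometricPolynomial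

open Complex

variable {a b : ℤ → ℂ}

lemma toFun_eq_sum {F : Finset ℤ} (h : support a ⊆ F) (x : ℝ) :
    toFun a x = ∑ n ∈ F, a n * exp (I * n * x) :=
  tsum_eq_sum' ((support_mul_subset_left _ _).trans h)

lemma hasDerivAt_toFun (ha : a.HasFiniteSupport) (x : ℝ) :
    HasDerivAt (toFun a) (toFun (derivOp a) x) x := by
  obtain ⟨F, hF⟩ := Set.Finite.exists_finset_coe ha
  rw [funext (toFun_eq_sum hF.ge),
    toFun_eq_sum (a := derivOp a) ((support_mul_subset_right _ _).trans hF.ge)]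
  refine HasDerivAt.fun_sum fun n _ => ?_
  have hexp := (((hasDerivAt_id' (x : ℂ)).const_mul (I * n)).comp_ofReal).cexp.const_mul (a n)
  exact hexp.congr_deriv (by rw [derivOp]; ring)

lemma continuous_toFun (ha : a.HasFiniteSupport) : Continuous (toFun a) :=
  continuous_iff_continuousAt.2 fun x => (hasDerivAt_toFun ha x).continuousAt

lemma toFun_two_pi : toFun a (2 * π) = toFun a 0 := by
  refine tsum_congr fun n => ?_
  have : I * n * ((2 * π : ℝ) : ℂ) = n * (2 * π * I) := by push_cast; ring
  rw [this, exp_int_mul_two_pi_mul_I]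
  simp

lemma integral_exp_I_int_mul (n : ℤ) :
    ∫ x in (0 : ℝ)..(2 * π), exp (I * n * x) = if n = 0 then (2 * π : ℂ) else 0 := by
  split_ifs with hn
  · simp [hn]
  have hc : I * n ≠ 0 := mul_ne_zero I_ne_zero (Int.cast_ne_zero.2 hn)
  have : I * n * ((2 * π : ℝ) : ℂ) = n * (2 * π * I) := by push_cast; ring
  rw [integral_exp_mul_complex hc, this, exp_int_mul_two_pi_mul_I]
  simp

lemma integral_toFun (ha : a.HasFiniteSupport) :
    ∫ x in (0 : ℝ)..(2 * π), toFun a x = 2 * π * a 0 := by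
  obtain ⟨F, hF⟩ := Set.Finite.exists_finset_coe ha
  simp_rw [toFun_eq_sum hF.ge]
  rw [intervalIntegral.integral_finsetSum
    fun n _ => Continuous.intervalIntegrable (by fun_prop) _ _]
  simp_rw [intervalIntegral.integral_const_mul, integral_exp_I_int_mul, mul_ite, mul_zero]
  rw [Finset.sum_ite_eq']
  split_ifs with h0
  · ring
  · rw [show a 0 = 0 from not_not.1 fun h => h0 (hF.ge h), mul_zero]

lemma tsum_shift_mul_exp (b : ℤ → ℂ) (n : ℤ) (x : ℝ) :
    ∑' k : ℤ, b (k - n) * exp (I * k * x) = exp (I * n * x) * toFun b x := by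
  rw [← (Equiv.addRight n).tsum_eq, toFun, ← tsum_mul_left]
  refine tsum_congr fun m => ?_
  simp only [Equiv.coe_addRight, add_sub_cancel_right, Int.cast_add]
  rw [show I * (m + n) * x = I * n * x + I * m * x by ring, Complex.exp_add]
  ring

lemma toFun_convC (ha : a.HasFiniteSupport) (hb : b.HasFiniteSupport) (x : ℝ) :
    toFun (convC a b) x = toFun a x * toFun b x := by
  obtain ⟨F, hF⟩ := Set.Finite.exists_finset_coe ha
  have hsummable : ∀ n, Summable fun k : ℤ => a n * b (k - n) * exp (I * k * x) := fun n =>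
    summable_of_hasFiniteSupport <| (hb.image (· + n)).subset fun k hk =>
      ⟨k - n, fun h => hk (by simp [h]), sub_add_cancel k n⟩
  calc toFun (convC a b) x
      = ∑' k, ∑ n ∈ F, a n * b (k - n) * exp (I * k * x) := by
        refine tsum_congr fun k => ?_
        rw [convC, tsum_eq_sum' ((support_mul_subset_left _ _).trans hF.ge), Finset.sum_mul]
    _ = ∑ n ∈ F, a n * exp (I * n * x) * toFun b x := by
        rw [Summable.tsum_finsetSum fun n _ => hsummable n]
        refine Finset.sum_congr rfl fun n _ => ?_
        simp_rw [mul_assoc, tsum_mul_left, ← mul_assoc, tsum_shift_mul_exp]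
        ring
    _ = toFun a x * toFun b x := by rw [toFun_eq_sum hF.ge, Finset.sum_mul]

lemma integral_toFun_mul (ha : a.HasFiniteSupport) (hb : b.HasFiniteSupport) :
    ∫ x in (0 : ℝ)..(2 * π), toFun a x * toFun b x = 2 * π * ∑' n, a n * b (-n) := by
  simp_rw [← toFun_convC ha hb, integral_toFun (ha.convC hb), convC, zero_sub]

end TrigonometricPolynomial

section Multipliers

variable {a b c : ℤ → ℂ}

lemma absD_derivOp (σ : ℝ) (a : ℤ → ℂ) : absD σ (derivOp a) = derivOp (absD σ a) := by
  funext n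
  simp only [absD, derivOp]
  ring

lemma invD_derivOp (a : ℤ → ℂ) : invD (derivOp a) = derivOp (invD a) := by
  funext n
  simp only [invD, derivOp]
  ring

lemma integral_toFun_absD_mul (σ : ℝ) (ha : a.HasFiniteSupport) (hb : b.HasFiniteSupport) :
    ∫ x in (0 : ℝ)..(2 * π), toFun (absD σ a) x * toFun b x
      = ∫ x in (0 : ℝ)..(2 * π), toFun a x * toFun (absD σ b) x := by
  rw [integral_toFun_mul (ha.absD σ) hb, integral_toFun_mul ha (hb.absD σ)]
  congr 1
  refine tsum_congr fun n => ?_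
  simp only [absD, Int.cast_neg, abs_neg]
  ring

lemma mul_abs_rpow_add_half_sq (s x : ℝ) :
    x * (|x| ^ (s + 1 / 2)) ^ 2 = x * (|x| ^ s) ^ 2 * |x| := by
  rcases eq_or_ne x 0 with rfl | hx
  · simp
  have h := abs_pos.2 hx
  rw [sq, sq, ← rpow_add h, ← rpow_add h, mul_assoc, ← rpow_add_one h.ne']
  rw [show s + 1 / 2 + (s + 1 / 2) = s + s + 1 by ring]

lemma integral_absD_invD_derivOp_add (s : ℝ) (ha : a.HasFiniteSupport)
    (hb : b.HasFiniteSupport) :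
    (∫ x in (0 : ℝ)..(2 * π),
        toFun (absD (s + 1 / 2) a) x * toFun (absD (s + 1 / 2) (invD (derivOp b))) x)
      + ∫ x in (0 : ℝ)..(2 * π), toFun (absD s a) x * toFun (absD s (invD (derivOp b))) x
      = ∫ x in (0 : ℝ)..(2 * π), toFun (absD s a) x * toFun (absD s (derivOp b)) x := by
  have hb' := hb.derivOp
  rw [integral_toFun_mul (ha.absD _) (hb'.invD.absD _),
    integral_toFun_mul (ha.absD _) (hb'.invD.absD _), integral_toFun_mul (ha.absD _) (hb'.absD _),
    ← mul_add, ← Summable.tsum_add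
      (summable_of_hasFiniteSupport ((ha.absD _).fun_mul_left _))
      (summable_of_hasFiniteSupport ((ha.absD _).fun_mul_left _))]
  congr 1
  refine tsum_congr fun n => ?_
  have key : (n : ℂ) * ((|(n : ℝ)| ^ (s + 1 / 2) : ℝ) : ℂ) ^ 2
      = n * ((|(n : ℝ)| ^ s : ℝ) : ℂ) ^ 2 * ((|(n : ℝ)| : ℝ) : ℂ) := by
    exact_mod_cast congrArg Complex.ofReal (mul_abs_rpow_add_half_sq s n)
  have hpos : ((1 + |(n : ℝ)| : ℝ) : ℂ) ≠ 0 := Complex.ofReal_ne_zero.2 (by positivity)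
  simp only [absD, invD, derivOp, Int.cast_neg, abs_neg]
  generalize ((|(n : ℝ)| ^ (s + 1 / 2) : ℝ) : ℂ) = X at key ⊢
  generalize ((|(n : ℝ)| ^ s : ℝ) : ℂ) = Y at key ⊢
  field_simp
  push_cast
  linear_combination -(a n * b (-n)) * key

lemma toFun_derivOp_convC_self (ha : a.HasFiniteSupport) (x : ℝ) :
    toFun (derivOp (convC a a)) x = 2 * toFun (convC a (derivOp a)) x := by
  have hprod : HasDerivAt (toFun (convC a a))
      (toFun (derivOp a) x * toFun a x + toFun a x * toFun (derivOp a) x) x := by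
    rw [funext (toFun_convC ha ha)]
    exact (hasDerivAt_toFun ha x).mul (hasDerivAt_toFun ha x)
  rw [(hasDerivAt_toFun (ha.convC ha) x).unique hprod, toFun_convC ha ha.derivOp]
  ring

lemma integral_sq_mul_toFun_derivOp (ha : a.HasFiniteSupport) (hc : c.HasFiniteSupport) :
    ∫ x in (0 : ℝ)..(2 * π), toFun a x ^ 2 * toFun (derivOp c) x
      = -2 * ∫ x in (0 : ℝ)..(2 * π), toFun a x * toFun c x * toFun (derivOp a) x := by
  have hderiv : ∀ x, HasDerivAt (fun y => toFun a y ^ 2 * toFun c y)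
      (toFun a x ^ 2 * toFun (derivOp c) x
        + 2 * (toFun a x * toFun c x * toFun (derivOp a) x)) x := fun x =>
    (((hasDerivAt_toFun ha x).fun_pow 2).mul (hasDerivAt_toFun hc x)).congr_deriv (by ring)
  have hfa := continuous_toFun ha
  have hfc := continuous_toFun hc
  have hfa' := continuous_toFun ha.derivOp
  have hfc' := continuous_toFun hc.derivOp
  have hftc := intervalIntegral.integral_eq_sub_of_hasDerivAt (fun x _ => hderiv x)
    (Continuous.intervalIntegrable (by fun_prop) 0 (2 * π))
  rw [toFun_two_pi, toFun_two_pi, sub_self, intervalIntegral.integral_add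
    (Continuous.intervalIntegrable (by fun_prop) _ _)
    (Continuous.intervalIntegrable (by fun_prop) _ _), intervalIntegral.integral_const_mul] at hftc
  linear_combination hftc

end Multipliers

theorem statement0_general (s : ℝ) (c : ℤ → ℂ)
    (hfin : ∃ N : ℕ, ∀ n : ℤ, (N : ℤ) < |n| → c n = 0) :
    -(2 / (π : ℂ)) * ∫ x in (0:ℝ)..(2 * π),
        toFun (absD (s + 1/2) c) x *
          toFun (absD (s + 1/2) (invD (derivOp (convC c c)))) x
      = (2 / (π : ℂ)) * (∫ x in (0:ℝ)..(2 * π),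
            (toFun (absD s c) x) ^ 2 * toFun (derivOp c) x)
        - (4 / (π : ℂ)) * (∫ x in (0:ℝ)..(2 * π),
            toFun (absD s c) x *
              (toFun (absD s (convC c (derivOp c))) x
                - toFun c x * toFun (absD s (derivOp c)) x))
        + (2 / (π : ℂ)) * (∫ x in (0:ℝ)..(2 * π),
            toFun (absD s c) x * toFun (derivOp (absD s (invD (convC c c)))) x) := by
  obtain ⟨N, hN⟩ := hfin
  have hc := HasFiniteSupport.of_forall_lt_abs N hN
  have hAc := hc.absD s
  have hcc := hc.convC hc
  have hcd := hc.convC hc.derivOp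
  have hmult : (∫ x in (0:ℝ)..(2 * π),
        toFun (absD (s + 1/2) c) x * toFun (absD (s + 1/2) (invD (derivOp (convC c c)))) x)
      + (∫ x in (0:ℝ)..(2 * π),
        toFun (absD s c) x * toFun (derivOp (absD s (invD (convC c c)))) x)
      = 2 * ∫ x in (0:ℝ)..(2 * π),
        toFun (absD s c) x * toFun (absD s (convC c (derivOp c))) x := by
    rw [← absD_derivOp, ← invD_derivOp, integral_absD_invD_derivOp_add s hc hcc,
      ← integral_toFun_absD_mul s hAc hcc.derivOp, ← integral_toFun_absD_mul s hAc hcd]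
    simp_rw [toFun_derivOp_convC_self hc, mul_left_comm _ (2 : ℂ)]
    exact intervalIntegral.integral_const_mul _ _
  have hparts := integral_sq_mul_toFun_derivOp hAc hc
  rw [← absD_derivOp] at hparts
  have hsplit : (∫ x in (0:ℝ)..(2 * π), toFun (absD s c) x *
        (toFun (absD s (convC c (derivOp c))) x - toFun c x * toFun (absD s (derivOp c)) x))
      = (∫ x in (0:ℝ)..(2 * π), toFun (absD s c) x * toFun (absD s (convC c (derivOp c))) x)
        - ∫ x in (0:ℝ)..(2 * π),
            toFun (absD s c) x * toFun c x * toFun (absD s (derivOp c)) x := by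
    simp_rw [mul_sub, ← mul_assoc]
    exact intervalIntegral.integral_sub
      (((continuous_toFun hAc).mul (continuous_toFun (hcd.absD s))).intervalIntegrable _ _)
      ((((continuous_toFun hAc).mul (continuous_toFun hc)).mul
        (continuous_toFun (hc.derivOp.absD s))).intervalIntegrable _ _)
  rw [hparts, hsplit]
  linear_combination -(2 / (π : ℂ)) * hmult

/-- Decomposition of the time derivative of the `H^{s+1/2}` norm along the
truncated BBM flow into the three terms `F_{1,N}`, `F_{2,N}`, `F_{3,N}`. -/
theorem statement0 (s : ℝ) (hs : 0 < s) (c : ℤ → ℂ)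
    (hfin : ∃ N : ℕ, ∀ n : ℤ, (N : ℤ) < |n| → c n = 0)
    (hzero : c 0 = 0)
    (hreal : ∀ n : ℤ, c (-n) = (starRingEnd ℂ) (c n)) :
    -(2 / (π : ℂ)) * ∫ x in (0:ℝ)..(2 * π),
        toFun (absD (s + 1/2) c) x *
          toFun (absD (s + 1/2) (invD (derivOp (convC c c)))) x
      = (2 / (π : ℂ)) * (∫ x in (0:ℝ)..(2 * π),
            (toFun (absD s c) x) ^ 2 * toFun (derivOp c) x)
        - (4 / (π : ℂ)) * (∫ x in (0:ℝ)..(2 * π),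
            toFun (absD s c) x *
              (toFun (absD s (convC c (derivOp c))) x
                - toFun c x * toFun (absD s (derivOp c)) x))
        + (2 / (π : ℂ)) * (∫ x in (0:ℝ)..(2 * π),
            toFun (absD s c) x * toFun (derivOp (absD s (invD (convC c c)))) x) :=
  statement0_general s c hfin
end

section
/- Let M ∈ ℕ and let x, y > 0 with x + y > 1. Let p, q ∈ [1,∞] (with the convention 1/∞ = 0) be such that max(1/p, 1/q) < x and max(1 − 1/p, 1 − 1/q) < y. Then there is a constant c = c(p,q,x,y) > 0 such that for all m ∈ ℤ: Σ_{n∈ℤ} ⟨n⟩^{−x}⟨m−n⟩^{−y} ≤ c·⟨m⟩^{−r}, where r := min(x − 1/p, 1/q − (1−y)). -/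
open scoped ENNReal

/-!
Since `⟨m⟩ ≤ ⟨n⟩ + ⟨m - n⟩`, one of the two factors `⟨n⟩`, `⟨m - n⟩` is at least `⟨m⟩ / 2`;
trading `r` powers of that factor for `2 ^ r ⟨m⟩^{-r}` and bounding what is left by the smaller
factor leaves `⟨n⟩^{-s} + ⟨m - n⟩^{-s}` with `s = x + y - r`, which is summable over `n` because
`s ≥ 1/p + y > 1`.
-/

/-- The Japanese bracket `⟨n⟩ = (1+n²)^{1/2}` of an integer. -/
noncomputable def jap (n : ℤ) : ℝ := Real.sqrt (1 + (n : ℝ) ^ 2)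

lemma jap_pos (n : ℤ) : 0 < jap n := Real.sqrt_pos.mpr (by positivity)

lemma jap_rpow_pos (n : ℤ) (s : ℝ) : 0 < jap n ^ s := Real.rpow_pos_of_pos (jap_pos n) s

lemma abs_le_jap (n : ℤ) : |(n : ℝ)| ≤ jap n := by
  rw [← Real.sqrt_sq_eq_abs]; exact Real.sqrt_le_sqrt (by linarith)

lemma jap_eq_norm (n : ℤ) : jap n = ‖(⟨1, n⟩ : ℂ)‖ := by
  rw [Complex.norm_def, Complex.normSq_mk, jap]; ring_nf

lemma jap_le_jap_add_jap_sub (m n : ℤ) : jap m ≤ jap n + jap (m - n) :=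
  calc jap m = ‖(⟨1, n⟩ : ℂ) + ⟨0, ((m - n : ℤ) : ℝ)⟩‖ := by
        rw [jap_eq_norm]; congr 1; apply Complex.ext <;> simp
    _ ≤ jap n + |((m - n : ℤ) : ℝ)| := by
        rw [jap_eq_norm]; refine (norm_add_le _ _).trans_eq ?_
        simp only [Complex.norm_def, Complex.normSq_mk]; simp [Real.sqrt_mul_self_eq_abs]
    _ ≤ jap n + jap (m - n) := by gcongr; exact abs_le_jap _

section RpowBounds

variable {A B C x y r : ℝ}

lemma rpow_neg_mul_rpow_neg_le_of_le (hB : 0 < B) (hBA : B ≤ A) (hC : 0 < C) (hCA : C ≤ 2 * A)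
    (hr : 0 ≤ r) (hrx : r ≤ x) :
    A ^ (-x) * B ^ (-y) ≤ 2 ^ r * C ^ (-r) * B ^ (-(x + y - r)) := by
  have hA : 0 < A := hB.trans_le hBA
  calc A ^ (-x) * B ^ (-y) = A ^ (-r) * (A ^ (-(x - r)) * B ^ (-y)) := by
        rw [← mul_assoc, ← Real.rpow_add hA]; ring_nf
    _ ≤ (C / 2) ^ (-r) * (B ^ (-(x - r)) * B ^ (-y)) := by
        refine mul_le_mul ?_ ?_ (by positivity) (by positivity)
        · exact Real.rpow_le_rpow_of_nonpos (by positivity) (by linarith) (by linarith)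
        · exact mul_le_mul_of_nonneg_right
            (Real.rpow_le_rpow_of_nonpos hB hBA (by linarith)) (by positivity)
    _ = 2 ^ r * C ^ (-r) * B ^ (-(x + y - r)) := by
        rw [← Real.rpow_add hB, Real.div_rpow hC.le zero_le_two, Real.rpow_neg zero_le_two]
        ring_nf; field_simp

lemma rpow_neg_mul_rpow_neg_le (hA : 0 < A) (hB : 0 < B) (hC : 0 < C) (hCAB : C ≤ A + B)
    (hr : 0 ≤ r) (hrx : r ≤ x) (hry : r ≤ y) :
    A ^ (-x) * B ^ (-y) ≤ 2 ^ r * C ^ (-r) * (A ^ (-(x + y - r)) + B ^ (-(x + y - r))) := by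
  have hK : 0 ≤ 2 ^ r * C ^ (-r) := by positivity
  rcases le_total B A with hBA | hAB
  · refine (rpow_neg_mul_rpow_neg_le_of_le hB hBA hC (by linarith) hr hrx).trans ?_
    exact mul_le_mul_of_nonneg_left (le_add_of_nonneg_left (by positivity)) hK
  · rw [mul_comm, add_comm x y]
    refine (rpow_neg_mul_rpow_neg_le_of_le hA hAB hC (by linarith) hr hry).trans ?_
    exact mul_le_mul_of_nonneg_left (le_add_of_nonneg_right (by positivity)) hK

end RpowBounds

lemma summable_jap_rpow_neg {s : ℝ} (hs : 1 < s) : Summable fun n : ℤ => jap n ^ (-s) := by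
  refine (Real.summable_abs_int_rpow hs).of_norm_bounded_eventually ?_
  filter_upwards [Filter.eventually_cofinite_ne 0] with n hn
  rw [Real.norm_of_nonneg (jap_rpow_pos n _).le]
  exact Real.rpow_le_rpow_of_nonpos (abs_pos.mpr (Int.cast_ne_zero.mpr hn)) (abs_le_jap n)
    (by linarith)

lemma tsum_jap_rpow_neg_mul_jap_sub_le {x y r : ℝ} (hr : 0 ≤ r) (hrx : r ≤ x) (hry : r ≤ y)
    (hs : 1 < x + y - r) (m : ℤ) :
    ∑' n : ℤ, jap n ^ (-x) * jap (m - n) ^ (-y)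
      ≤ 2 ^ r * (2 * ∑' n : ℤ, jap n ^ (-(x + y - r))) * jap m ^ (-r) := by
  set s := x + y - r
  have hsum := summable_jap_rpow_neg hs
  have hsum_sub : Summable fun n : ℤ => jap (m - n) ^ (-s) :=
    (Equiv.subLeft m).summable_iff.mpr hsum
  have htsum_sub : ∑' n : ℤ, jap (m - n) ^ (-s) = ∑' n : ℤ, jap n ^ (-s) :=
    (Equiv.subLeft m).tsum_eq fun k => jap k ^ (-s)
  have hpointwise (n : ℤ) : jap n ^ (-x) * jap (m - n) ^ (-y)
      ≤ 2 ^ r * jap m ^ (-r) * (jap n ^ (-s) + jap (m - n) ^ (-s)) :=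
    rpow_neg_mul_rpow_neg_le (jap_pos n) (jap_pos _) (jap_pos m) (jap_le_jap_add_jap_sub m n)
      hr hrx hry
  have hbound := (hsum.add hsum_sub).mul_left (2 ^ r * jap m ^ (-r))
  calc ∑' n : ℤ, jap n ^ (-x) * jap (m - n) ^ (-y)
      ≤ ∑' n : ℤ, 2 ^ r * jap m ^ (-r) * (jap n ^ (-s) + jap (m - n) ^ (-s)) :=
        (hbound.of_nonneg_of_le (fun n => (mul_pos (jap_rpow_pos n _) (jap_rpow_pos _ _)).le)
          hpointwise).tsum_le_tsum hpointwise hbound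
    _ = 2 ^ r * (2 * ∑' n : ℤ, jap n ^ (-s)) * jap m ^ (-r) := by
        rw [tsum_mul_left, hsum.tsum_add hsum_sub, htsum_sub]
        ring

theorem statement2_general (x y : ℝ)
    (p q : ℝ≥0∞) (hq : 1 ≤ q)
    (hpq_x : max (p⁻¹).toReal (q⁻¹).toReal < x)
    (hpq_y : max (1 - (p⁻¹).toReal) (1 - (q⁻¹).toReal) < y) :
    ∃ c > 0, ∀ m : ℤ,
      ∑' n : ℤ, jap n ^ (-x) * jap (m - n) ^ (-y)
        ≤ c * jap m ^ (-(min (x - (p⁻¹).toReal) ((q⁻¹).toReal - (1 - y)))) := by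
  set a := (p⁻¹).toReal
  set b := (q⁻¹).toReal
  have ha : 0 ≤ a := ENNReal.toReal_nonneg
  have hb : b ≤ 1 := ENNReal.toReal_le_of_le_ofReal zero_le_one (by simpa using hq)
  have hax : a < x := (le_max_left _ _).trans_lt hpq_x
  have hay : 1 - a < y := (le_max_left _ _).trans_lt hpq_y
  have hby : 1 - b < y := (le_max_right _ _).trans_lt hpq_y
  set r := min (x - a) (b - (1 - y))
  have hr : 0 ≤ r := le_min (by linarith) (by linarith)
  have hrx : r ≤ x := (min_le_left _ _).trans (by linarith)
  have hry : r ≤ y := (min_le_right _ _).trans (by linarith)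
  have hs : 1 < x + y - r := by linarith [min_le_left (x - a) (b - (1 - y))]
  have hT : 0 < ∑' n : ℤ, jap n ^ (-(x + y - r)) :=
    (summable_jap_rpow_neg hs).tsum_pos (fun n => (jap_rpow_pos n _).le) 0 (jap_rpow_pos 0 _)
  exact ⟨_, by positivity, tsum_jap_rpow_neg_mul_jap_sub_le hr hrx hry hs⟩

/-- Decay of discrete convolutions: full-sum estimate. -/
theorem statement2 (M : ℕ) (x y : ℝ) (hx : 0 < x) (hy : 0 < y) (hxy : 1 < x + y)
    (p q : ℝ≥0∞) (hp : 1 ≤ p) (hq : 1 ≤ q)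
    (hpq_x : max (p⁻¹).toReal (q⁻¹).toReal < x)
    (hpq_y : max (1 - (p⁻¹).toReal) (1 - (q⁻¹).toReal) < y) :
    ∃ c > 0, ∀ m : ℤ,
      ∑' n : ℤ, jap n ^ (-x) * jap (m - n) ^ (-y)
        ≤ c * jap m ^ (-(min (x - (p⁻¹).toReal) ((q⁻¹).toReal - (1 - y)))) :=
  statement2_general x y p q hq hpq_x hpq_y
end

section
/- Let s > 1/2. There is a constant C > 0, depending only on s, such that for all integers N > M ≥ 1: Σ_{(n₁,n₂,n₃)∈A_{N,M}} |n₁|^{2s}|n₂|^{2s} n₃² / ( |n₁|^{2s+1}|n₂|^{2s+1}|n₃|^{2s+1} ) ≤ C·M^{−(s−1/2)} if 1/2 < s ≤ 3/2, and ≤ C·M^{−1} if s > 3/2. -/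
/-!
Since `n₁ + n₂ + n₃ = 0`, the summand equals `|n₁|⁻¹ |n₂|⁻¹ |n₃|^(1 - 2s)`, which is at most
`|n₁|⁻¹ |n₂|⁻¹ |n₃|^(-2θ)` with `θ = min (s - 1/2) 1`. Split `A_{N,M}` according to which
coordinate `k` has `|k| > M` and parametrize the triple by `k` and one other coordinate `m`.
The sum over `m` is a discrete convolution: `∑ₘ |m|^(-a) |k + m|^(-b) ≲ |k|^(-(a + b - 1 - θ))`,
because the larger of `|m|` and `|k + m|` is at least `|k| / 2`. The remaining sum over `k` is
then `∑_{|k| > M} |k|^(-1-θ) ≲ M^(-θ)`.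
-/

open Finset Real

/-- The index set `A_{N,M}` of triples of nonzero integers summing to zero with
`M < max |n_i| ≤ N`. -/
noncomputable def ANM (N M : ℕ) : Finset (ℤ × ℤ × ℤ) :=
  ((Finset.Icc (-(N : ℤ)) N ×ˢ Finset.Icc (-(N : ℤ)) N ×ˢ Finset.Icc (-(N : ℤ)) N).filter
    fun p => p.1 ≠ 0 ∧ p.2.1 ≠ 0 ∧ p.2.2 ≠ 0 ∧ p.1 + p.2.1 + p.2.2 = 0 ∧
      (M : ℤ) < max |p.1| (max |p.2.1| |p.2.2|))

lemma sum_le_sum_of_injOn {ι κ M : Type*} [AddCommMonoid M] [PartialOrder M]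
    [IsOrderedAddMonoid M] {s : Finset ι} {t : Finset κ} {f : ι → M} {g : κ → M}
    (e : ι → κ) (he : Set.InjOn e s) (hst : Set.MapsTo e s t) (hg : ∀ j ∈ t, 0 ≤ g j)
    (hfg : ∀ i ∈ s, f i ≤ g (e i)) : ∑ i ∈ s, f i ≤ ∑ j ∈ t, g j := by
  classical
  calc ∑ i ∈ s, f i ≤ ∑ i ∈ s, g (e i) := sum_le_sum hfg
    _ = ∑ j ∈ s.image e, g j := (sum_image he).symm
    _ ≤ ∑ j ∈ t, g j :=
        sum_le_sum_of_subset_of_nonneg (image_subset_iff.2 hst) fun j hj _ ↦ hg j hj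

lemma sum_le_sum_filter_add_sum_filter_add_sum_filter {ι M : Type*} [AddCommMonoid M]
    [PartialOrder M] [IsOrderedAddMonoid M] {s : Finset ι} {f : ι → M} (P Q R : ι → Prop)
    [DecidablePred P] [DecidablePred Q] [DecidablePred R] (hf : ∀ i ∈ s, 0 ≤ f i)
    (hPQR : ∀ i ∈ s, P i ∨ Q i ∨ R i) :
    ∑ i ∈ s, f i ≤ ∑ i ∈ s with P i, f i + ∑ i ∈ s with Q i, f i + ∑ i ∈ s with R i, f i := by
  rw [sum_filter, sum_filter, sum_filter, ← sum_add_distrib, ← sum_add_distrib]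
  refine sum_le_sum fun i hi ↦ ?_
  have h0 (p : Prop) [Decidable p] : 0 ≤ if p then f i else 0 := by
    split_ifs
    exacts [hf i hi, le_rfl]
  rcases hPQR i hi with h | h | h
  · exact le_add_of_le_of_nonneg (le_add_of_le_of_nonneg (by simp [h]) (h0 _)) (h0 _)
  · exact le_add_of_le_of_nonneg (le_add_of_nonneg_of_le (h0 _) (by simp [h])) (h0 _)
  · exact le_add_of_nonneg_of_le (add_nonneg (h0 _) (h0 _)) (by simp [h])

lemma sum_Ioc_rpow_neg_le {p : ℝ} (hp : 1 < p) {M : ℕ} (hM : 0 < M) (L : ℕ) :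
    ∑ n ∈ Ioc M L, (n : ℝ) ^ (-p) ≤ (M : ℝ) ^ (1 - p) / (p - 1) := by
  have hM0 : (0 : ℝ) < M := by exact_mod_cast hM
  rcases lt_or_ge L M with hLM | hML
  · rw [Ioc_eq_empty_of_le hLM.le, sum_empty]
    exact div_nonneg (rpow_nonneg hM0.le _) (by linarith)
  have hanti : AntitoneOn (fun x : ℝ ↦ x ^ (-p)) (Set.Icc M L) :=
    (antitoneOn_rpow_Ioi_of_exponent_nonpos (by linarith)).mono fun x hx ↦ hM0.trans_le hx.1
  have hzero : (0 : ℝ) ∉ Set.uIcc (M : ℝ) L := by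
    rw [Set.uIcc_of_le (by exact_mod_cast hML)]
    exact fun h ↦ h.1.not_gt hM0
  have hL0 : 0 ≤ (L : ℝ) ^ (1 - p) := rpow_nonneg (Nat.cast_nonneg L) _
  calc ∑ n ∈ Ioc M L, (n : ℝ) ^ (-p) = ∑ i ∈ Ico M L, ((i + 1 : ℕ) : ℝ) ^ (-p) := by
        rw [sum_Ico_add' (fun n : ℕ ↦ (n : ℝ) ^ (-p)), Ico_add_one_add_one_eq_Ioc]
    _ ≤ ∫ x in (M : ℝ)..L, x ^ (-p) := hanti.sum_le_integral_Ico hML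
    _ = ((M : ℝ) ^ (1 - p) - (L : ℝ) ^ (1 - p)) / (p - 1) := by
        rw [integral_rpow (Or.inr ⟨by linarith, hzero⟩), show -p + 1 = 1 - p by ring,
          div_eq_div_iff (by linarith) (by linarith)]
        ring
    _ ≤ (M : ℝ) ^ (1 - p) / (p - 1) := by
        gcongr
        linarith

lemma sum_abs_rpow_neg_le_of_lt_abs {p : ℝ} (hp : 1 < p) {M : ℕ} (hM : 0 < M) (S : Finset ℤ) :
    ∑ k ∈ S with (M : ℤ) < |k|, |(k : ℝ)| ^ (-p) ≤ 2 * ((M : ℝ) ^ (1 - p) / (p - 1)) := by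
  have half (T : Finset ℤ) (hT : Set.InjOn Int.natAbs T) (hTS : T ⊆ S.filter ((M : ℤ) < |·|)) :
      ∑ k ∈ T, |(k : ℝ)| ^ (-p) ≤ (M : ℝ) ^ (1 - p) / (p - 1) := by
    refine (sum_le_sum_of_injOn Int.natAbs hT (t := Ioc M (S.sup Int.natAbs)) (fun k hk ↦ ?_)
      (fun n _ ↦ rpow_nonneg (Nat.cast_nonneg n) _) fun k _ ↦ ?_).trans
      (sum_Ioc_rpow_neg_le hp hM _)
    · obtain ⟨hkS, hMk⟩ := mem_filter.1 (hTS hk)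
      rw [Int.abs_eq_natAbs] at hMk
      exact mem_Ioc.2 ⟨by omega, le_sup (f := Int.natAbs) hkS⟩
    · rw [Nat.cast_natAbs, Int.cast_abs]
  rw [← sum_filter_add_sum_filter_not _ (0 < ·), two_mul]
  refine add_le_add (half _ (fun a ha b hb h ↦ ?_) (filter_subset _ _))
    (half _ (fun a ha b hb h ↦ ?_) (filter_subset _ _))
  all_goals
    have := (mem_filter.1 ha).2
    have := (mem_filter.1 hb).2
    omega

lemma sum_abs_rpow_neg_le {p : ℝ} (hp : 1 < p) (S : Finset ℤ) :
    ∑ k ∈ S, |(k : ℝ)| ^ (-p) ≤ 2 * (p / (p - 1)) := by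
  have hsmall : ∑ k ∈ S with ¬ (1 : ℤ) < |k|, |(k : ℝ)| ^ (-p) ≤ 2 :=
    calc ∑ k ∈ S with ¬ (1 : ℤ) < |k|, |(k : ℝ)| ^ (-p)
        ≤ ∑ k ∈ ({-1, 0, 1} : Finset ℤ), |(k : ℝ)| ^ (-p) := by
          refine sum_le_sum_of_subset_of_nonneg (fun k hk ↦ ?_)
            fun k _ _ ↦ rpow_nonneg (abs_nonneg _) _
          simp only [mem_filter, not_lt] at hk
          simp only [mem_insert, mem_singleton]
          have := abs_le.1 hk.2
          omega
      _ = 2 := by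
          norm_num [zero_rpow (neg_ne_zero.2 (by linarith : p ≠ 0))]
  have htail := sum_abs_rpow_neg_le_of_lt_abs hp one_pos S
  rw [← sum_filter_add_sum_filter_not _ ((1 : ℤ) < |·|)]
  have : 2 * (((1 : ℕ) : ℝ) ^ (1 - p) / (p - 1)) + 2 = 2 * (p / (p - 1)) := by
    rw [Nat.cast_one, one_rpow]
    field_simp [show p - 1 ≠ 0 by linarith]
    ring
  linarith

lemma rpow_neg_mul_rpow_neg_le_of_le_s9 {y z w a b e : ℝ} (hy : 0 < y) (hyz : y ≤ z) (hw : 0 < w)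
    (hwz : w ≤ z) (hae : a ≤ e) (heab : e ≤ a + b) :
    y ^ (-a) * z ^ (-b) ≤ y ^ (-e) * w ^ (-(a + b - e)) := by
  have hz : 0 < z := hy.trans_le hyz
  calc y ^ (-a) * z ^ (-b) = y ^ (-a) * (z ^ (-(e - a)) * z ^ (-(a + b - e))) := by
        rw [← rpow_add hz]; ring_nf
    _ ≤ y ^ (-a) * (y ^ (-(e - a)) * w ^ (-(a + b - e))) := by
        refine mul_le_mul_of_nonneg_left (mul_le_mul_of_nonneg_right ?_ (by positivity))
          (by positivity) |>.trans (mul_le_mul_of_nonneg_left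
            (mul_le_mul_of_nonneg_left ?_ (by positivity)) (by positivity))
        · exact rpow_le_rpow_of_nonpos hy hyz (by linarith)
        · exact rpow_le_rpow_of_nonpos hw hwz (by linarith)
    _ = y ^ (-e) * w ^ (-(a + b - e)) := by
        rw [← mul_assoc, ← rpow_add hy]; ring_nf

lemma rpow_neg_mul_rpow_neg_le_s9 {x y z a b e : ℝ} (hx : 0 < x) (hy : 0 < y) (hz : 0 < z)
    (hxyz : x ≤ y + z) (hae : a ≤ e) (hbe : b ≤ e) (heab : e ≤ a + b) :
    y ^ (-a) * z ^ (-b) ≤ (x / 2) ^ (-(a + b - e)) * (y ^ (-e) + z ^ (-e)) := by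
  have hx2 : 0 < x / 2 := half_pos hx
  have hy' := rpow_nonneg hy.le (-e)
  have hz' := rpow_nonneg hz.le (-e)
  have hc := rpow_nonneg hx2.le (-(a + b - e))
  -- the larger of `y` and `z` is at least `x / 2`
  rcases le_total y z with hyz | hzy
  · have := rpow_neg_mul_rpow_neg_le_of_le_s9 hy hyz hx2 (by linarith) hae heab
    nlinarith
  · have := rpow_neg_mul_rpow_neg_le_of_le_s9 (a := b) (b := a) hz hzy hx2 (by linarith) hbe
      (by linarith)
    rw [add_comm b a] at this
    nlinarith

lemma abs_rpow_neg_mul_abs_rpow_neg_le {a b e : ℝ} (ha : 0 < a) (hb : 0 < b) (hae : a ≤ e)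
    (hbe : b ≤ e) (heab : e ≤ a + b) {k : ℤ} (hk : k ≠ 0) (m : ℤ) :
    |(m : ℝ)| ^ (-a) * |(k + m : ℝ)| ^ (-b)
      ≤ (|(k : ℝ)| / 2) ^ (-(a + b - e)) * (|(m : ℝ)| ^ (-e) + |(k + m : ℝ)| ^ (-e)) := by
  have hrhs :
      0 ≤ (|(k : ℝ)| / 2) ^ (-(a + b - e)) * (|(m : ℝ)| ^ (-e) + |(k + m : ℝ)| ^ (-e)) := by
    positivity
  rcases eq_or_ne m 0 with rfl | hm
  · simpa [zero_rpow (neg_ne_zero.2 ha.ne')] using hrhs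
  rcases eq_or_ne (k + m) 0 with hkm | hkm
  · have : (k + m : ℝ) = 0 := by exact_mod_cast hkm
    simpa [this, zero_rpow (neg_ne_zero.2 hb.ne')] using hrhs
  refine rpow_neg_mul_rpow_neg_le_s9 (by positivity) (by positivity) ?_ ?_ hae hbe heab
  · exact abs_pos.2 (by exact_mod_cast hkm)
  · calc |(k : ℝ)| = |(k + m : ℝ) + -m| := by ring_nf
      _ ≤ |(k + m : ℝ)| + |-(m : ℝ)| := abs_add_le _ _
      _ = |(m : ℝ)| + |(k + m : ℝ)| := by rw [abs_neg, add_comm]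

lemma sum_abs_rpow_neg_mul_le {a b e : ℝ} (he : 1 < e) (ha : 0 < a) (hb : 0 < b) (hae : a ≤ e)
    (hbe : b ≤ e) (heab : e ≤ a + b) {k : ℤ} (hk : k ≠ 0) (S : Finset ℤ) :
    ∑ m ∈ S, |(m : ℝ)| ^ (-a) * |(k + m : ℝ)| ^ (-b)
      ≤ 4 * (e / (e - 1)) * (|(k : ℝ)| / 2) ^ (-(a + b - e)) := by
  have hshift : ∑ m ∈ S, |(k + m : ℝ)| ^ (-e) ≤ 2 * (e / (e - 1)) := by
    have := sum_abs_rpow_neg_le he (S.image (k + ·))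
    rw [sum_image fun _ _ _ _ h ↦ by simpa using h] at this
    push_cast at this
    exact this
  calc ∑ m ∈ S, |(m : ℝ)| ^ (-a) * |(k + m : ℝ)| ^ (-b)
      ≤ ∑ m ∈ S, (|(k : ℝ)| / 2) ^ (-(a + b - e)) * (|(m : ℝ)| ^ (-e) + |(k + m : ℝ)| ^ (-e)) :=
        sum_le_sum fun m _ ↦ abs_rpow_neg_mul_abs_rpow_neg_le ha hb hae hbe heab hk m
    _ = (|(k : ℝ)| / 2) ^ (-(a + b - e)) *
          (∑ m ∈ S, |(m : ℝ)| ^ (-e) + ∑ m ∈ S, |(k + m : ℝ)| ^ (-e)) := by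
        rw [← mul_sum, sum_add_distrib]
    _ ≤ (|(k : ℝ)| / 2) ^ (-(a + b - e)) * (2 * (e / (e - 1)) + 2 * (e / (e - 1))) := by
        gcongr
        exact sum_abs_rpow_neg_le he S
    _ = 4 * (e / (e - 1)) * (|(k : ℝ)| / 2) ^ (-(a + b - e)) := by ring

/-- The weight `|k|^(-α) |m|^(-a) |n|^(-b)` of the zero-sum triple `(k, m, n)`. It vanishes when
a coordinate with nonzero exponent is `0`, as `0 ^ x = 0` for `x ≠ 0`. -/
noncomputable def pairWeight (α a b : ℝ) (q : ℤ × ℤ) : ℝ :=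
  |(q.1 : ℝ)| ^ (-α) * (|(q.2 : ℝ)| ^ (-a) * |(q.1 + q.2 : ℝ)| ^ (-b))

lemma pairWeight_nonneg (α a b : ℝ) (q : ℤ × ℤ) : 0 ≤ pairWeight α a b q := by
  unfold pairWeight; positivity

lemma exists_sum_pairWeight_le {e α a b : ℝ} (he : 1 < e) (ha : 0 < a) (hb : 0 < b)
    (hae : a ≤ e) (hbe : b ≤ e) (heab : e ≤ a + b) (hα : α + (a + b - e) = e) :
    ∃ C > 0, ∀ M : ℕ, 0 < M → ∀ S T : Finset ℤ,
      ∑ q ∈ S.filter ((M : ℤ) < |·|) ×ˢ T, pairWeight α a b q ≤ C * (M : ℝ) ^ (1 - e) := by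
  set c := a + b - e
  set D := 2 ^ c * (4 * (e / (e - 1)))
  have he' : 0 < e - 1 := by linarith
  have hD : 0 < D := by positivity
  refine ⟨D * (2 / (e - 1)), by positivity, fun M hM S T ↦ ?_⟩
  have hconv (k : ℤ) (hk : k ≠ 0) : ∑ m ∈ T, pairWeight α a b (k, m) ≤ D * |(k : ℝ)| ^ (-e) := by
    have hk' : 0 < |(k : ℝ)| := abs_pos.2 (by exact_mod_cast hk)
    calc ∑ m ∈ T, pairWeight α a b (k, m)
        = |(k : ℝ)| ^ (-α) * ∑ m ∈ T, |(m : ℝ)| ^ (-a) * |(k + m : ℝ)| ^ (-b) := by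
          simp only [pairWeight, mul_sum]
      _ ≤ |(k : ℝ)| ^ (-α) * (4 * (e / (e - 1)) * (|(k : ℝ)| / 2) ^ (-c)) :=
          mul_le_mul_of_nonneg_left (sum_abs_rpow_neg_mul_le he ha hb hae hbe heab hk T)
            (by positivity)
      _ = D * |(k : ℝ)| ^ (-e) := by
          rw [div_rpow hk'.le zero_le_two, rpow_neg zero_le_two,
            show -e = -α + -c by rw [← hα]; ring, rpow_add hk']
          simp only [D]
          field_simp
  calc ∑ q ∈ S.filter ((M : ℤ) < |·|) ×ˢ T, pairWeight α a b q
      = ∑ k ∈ S.filter ((M : ℤ) < |·|), ∑ m ∈ T, pairWeight α a b (k, m) := sum_product _ _ _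
    _ ≤ ∑ k ∈ S.filter ((M : ℤ) < |·|), D * |(k : ℝ)| ^ (-e) := by
        refine sum_le_sum fun k hk ↦ hconv k ?_
        rintro rfl
        simp only [mem_filter, abs_zero] at hk
        omega
    _ ≤ D * (2 * ((M : ℝ) ^ (1 - e) / (e - 1))) := by
        rw [← mul_sum]
        exact mul_le_mul_of_nonneg_left (sum_abs_rpow_neg_le_of_lt_abs he hM S) hD.le
    _ = D * (2 / (e - 1)) * (M : ℝ) ^ (1 - e) := by ring

lemma mem_ANM {N M : ℕ} {p : ℤ × ℤ × ℤ} : p ∈ ANM N M ↔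
    (p.1 ∈ Icc (-(N : ℤ)) N ∧ p.2.1 ∈ Icc (-(N : ℤ)) N ∧ p.2.2 ∈ Icc (-(N : ℤ)) N) ∧
      p.1 ≠ 0 ∧ p.2.1 ≠ 0 ∧ p.2.2 ≠ 0 ∧ p.1 + p.2.1 + p.2.2 = 0 ∧
      (M : ℤ) < max |p.1| (max |p.2.1| |p.2.2|) := by
  simp only [ANM, mem_filter, mem_product]

lemma sum_ANM_pairWeight_le (N M : ℕ) (β : ℝ) :
    ∑ p ∈ ANM N M, pairWeight 1 1 β (p.1, p.2.1) ≤
      2 * ∑ q ∈ (Icc (-(N : ℤ)) N).filter ((M : ℤ) < |·|) ×ˢ Icc (-(N : ℤ)) N, pairWeight 1 1 β q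
        + ∑ q ∈ (Icc (-(N : ℤ)) N).filter ((M : ℤ) < |·|) ×ˢ Icc (-(N : ℤ)) N,
            pairWeight β 1 1 q := by
  set I := Icc (-(N : ℤ)) N
  set T := I.filter ((M : ℤ) < |·|) ×ˢ I
  have hT (α a b : ℝ) : ∀ q ∈ T, 0 ≤ pairWeight α a b q := fun q _ ↦ pairWeight_nonneg α a b q
  have inj (e : ℤ × ℤ × ℤ → ℤ × ℤ) (he : ∀ p q : ℤ × ℤ × ℤ, p.1 + p.2.1 + p.2.2 = 0 →
      q.1 + q.2.1 + q.2.2 = 0 → e p = e q → p = q) (P : ℤ × ℤ × ℤ → Prop) [DecidablePred P] :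
      Set.InjOn e ((ANM N M).filter P) := fun p hp q hq ↦
    he p q (mem_ANM.1 (mem_filter.1 hp).1).2.2.2.2.1 (mem_ANM.1 (mem_filter.1 hq).1).2.2.2.2.1
  have mapsTo (e : ℤ × ℤ × ℤ → ℤ × ℤ) (P : ℤ × ℤ × ℤ → Prop) [DecidablePred P]
      (he : ∀ p ∈ ANM N M, P p → (e p).1 ∈ I ∧ (M : ℤ) < |(e p).1| ∧ (e p).2 ∈ I) :
      Set.MapsTo e ((ANM N M).filter P) T := fun p hp ↦ by
    obtain ⟨hp, hP⟩ := mem_filter.1 hp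
    obtain ⟨h₁, h₂, h₃⟩ := he p hp hP
    exact mem_coe.2 (mem_product.2 ⟨mem_filter.2 ⟨h₁, h₂⟩, h₃⟩)
  have part₁ : ∑ p ∈ ANM N M with (M : ℤ) < |p.1|, pairWeight 1 1 β (p.1, p.2.1)
      ≤ ∑ q ∈ T, pairWeight 1 1 β q := by
    refine sum_le_sum_of_injOn (fun p ↦ (p.1, p.2.1)) (inj _ (fun p q hp hq h ↦ ?_) _)
      (mapsTo _ _ fun p hp hM ↦ ⟨(mem_ANM.1 hp).1.1, hM, (mem_ANM.1 hp).1.2.1⟩) (hT _ _ _)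
      fun p _ ↦ le_rfl
    simp only [Prod.mk.injEq] at h
    ext <;> omega
  have part₂ : ∑ p ∈ ANM N M with (M : ℤ) < |p.2.1|, pairWeight 1 1 β (p.1, p.2.1)
      ≤ ∑ q ∈ T, pairWeight 1 1 β q := by
    refine sum_le_sum_of_injOn (fun p ↦ (p.2.1, p.1)) (inj _ (fun p q hp hq h ↦ ?_) _)
      (mapsTo _ _ fun p hp hM ↦ ⟨(mem_ANM.1 hp).1.2.1, hM, (mem_ANM.1 hp).1.1⟩) (hT _ _ _)
      fun p _ ↦ ?_
    · simp only [Prod.mk.injEq] at h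
      ext <;> omega
    · simp only [pairWeight, add_comm (p.1 : ℝ)]
      exact le_of_eq (by ring)
  have part₃ : ∑ p ∈ ANM N M with (M : ℤ) < |p.2.2|, pairWeight 1 1 β (p.1, p.2.1)
      ≤ ∑ q ∈ T, pairWeight β 1 1 q := by
    refine sum_le_sum_of_injOn (fun p ↦ (p.2.2, p.1)) (inj _ (fun p q hp hq h ↦ ?_) _)
      (mapsTo _ _ fun p hp hM ↦ ⟨(mem_ANM.1 hp).1.2.2, hM, (mem_ANM.1 hp).1.1⟩) (hT _ _ _)
      fun p hp ↦ ?_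
    · simp only [Prod.mk.injEq] at h
      ext <;> omega
    · have hsum : (p.1 + p.2.1 + p.2.2 : ℝ) = 0 := by
        exact_mod_cast (mem_ANM.1 (mem_filter.1 hp).1).2.2.2.2.1
      simp only [pairWeight]
      rw [show (p.1 + p.2.1 : ℝ) = -p.2.2 by linarith, show (p.2.2 + p.1 : ℝ) = -p.2.1 by linarith,
        abs_neg, abs_neg]
      exact le_of_eq (by ring)
  calc ∑ p ∈ ANM N M, pairWeight 1 1 β (p.1, p.2.1)
      ≤ ∑ p ∈ ANM N M with (M : ℤ) < |p.1|, pairWeight 1 1 β (p.1, p.2.1)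
        + ∑ p ∈ ANM N M with (M : ℤ) < |p.2.1|, pairWeight 1 1 β (p.1, p.2.1)
        + ∑ p ∈ ANM N M with (M : ℤ) < |p.2.2|, pairWeight 1 1 β (p.1, p.2.1) :=
        sum_le_sum_filter_add_sum_filter_add_sum_filter _ _ _ (fun p _ ↦ pairWeight_nonneg _ _ _ _)
          fun p hp ↦ by simpa only [lt_max_iff] using (mem_ANM.1 hp).2.2.2.2.2
    _ ≤ 2 * ∑ q ∈ T, pairWeight 1 1 β q + ∑ q ∈ T, pairWeight β 1 1 q := by
        linarith

lemma wick_summand_le_pairWeight {s β : ℝ} (hβ : β ≤ 2 * s - 1) {x y z : ℤ} (hx : x ≠ 0)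
    (hy : y ≠ 0) (hz : z ≠ 0) (hxyz : x + y + z = 0) :
    |(x : ℝ)| ^ (2 * s) * |(y : ℝ)| ^ (2 * s) * (z : ℝ) ^ 2 /
        (|(x : ℝ)| ^ (2 * s + 1) * |(y : ℝ)| ^ (2 * s + 1) * |(z : ℝ)| ^ (2 * s + 1))
      ≤ pairWeight 1 1 β (x, y) := by
  have hx' : 0 < |(x : ℝ)| := abs_pos.2 (by exact_mod_cast hx)
  have hy' : 0 < |(y : ℝ)| := abs_pos.2 (by exact_mod_cast hy)
  have hz' : 1 ≤ |(z : ℝ)| := by exact_mod_cast Int.one_le_abs hz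
  have hxy : |(x + y : ℝ)| = |(z : ℝ)| := by
    rw [show (x + y : ℝ) = -z by exact_mod_cast (eq_neg_of_add_eq_zero_left hxyz), abs_neg]
  have hsplit (t : ℝ) (ht : 0 < t) : t ^ (2 * s) / t ^ (2 * s + 1) = t ^ (-1 : ℝ) := by
    rw [← rpow_sub ht]; ring_nf
  calc |(x : ℝ)| ^ (2 * s) * |(y : ℝ)| ^ (2 * s) * (z : ℝ) ^ 2 /
        (|(x : ℝ)| ^ (2 * s + 1) * |(y : ℝ)| ^ (2 * s + 1) * |(z : ℝ)| ^ (2 * s + 1))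
      = |(x : ℝ)| ^ (-1 : ℝ) * (|(y : ℝ)| ^ (-1 : ℝ) * |(z : ℝ)| ^ (2 - (2 * s + 1))) := by
        rw [← hsplit _ hx', ← hsplit _ hy', ← sq_abs, ← rpow_two, rpow_sub (by linarith)]
        ring
    _ ≤ pairWeight 1 1 β (x, y) := by
        rw [pairWeight, hxy]
        gcongr
        linarith

/-- Estimate on the Wick sum with weight `|n₁|^{2s}|n₂|^{2s}n₃²`. -/
theorem statement9 (s : ℝ) (hs : 1 / 2 < s) :
    ∃ C > 0, ∀ N M : ℕ, 1 ≤ M → M < N →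
      ((s ≤ 3 / 2 →
        ∑ p ∈ ANM N M,
            |(p.1 : ℝ)| ^ (2 * s) * |(p.2.1 : ℝ)| ^ (2 * s) * (p.2.2 : ℝ) ^ 2 /
              (|(p.1 : ℝ)| ^ (2 * s + 1) * |(p.2.1 : ℝ)| ^ (2 * s + 1) *
                |(p.2.2 : ℝ)| ^ (2 * s + 1))
          ≤ C * (M : ℝ) ^ (-(s - 1 / 2))) ∧
      (3 / 2 < s →
        ∑ p ∈ ANM N M,
            |(p.1 : ℝ)| ^ (2 * s) * |(p.2.1 : ℝ)| ^ (2 * s) * (p.2.2 : ℝ) ^ 2 /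
              (|(p.1 : ℝ)| ^ (2 * s + 1) * |(p.2.1 : ℝ)| ^ (2 * s + 1) *
                |(p.2.2 : ℝ)| ^ (2 * s + 1))
          ≤ C * (M : ℝ) ^ (-(1 : ℝ)))) := by
  set θ := min (s - 1 / 2) 1
  have hθ₀ : 0 < θ := lt_min (by linarith) one_pos
  have hθ₁ : θ ≤ 1 := min_le_right _ _
  have hθs : 2 * θ ≤ 2 * s - 1 := by linarith [min_le_left (s - 1 / 2) 1]
  obtain ⟨C₁, hC₁, h₁⟩ := exists_sum_pairWeight_le (e := 1 + θ) (α := 1) (a := 1) (b := 2 * θ)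
    (by linarith) one_pos (by linarith) (by linarith) (by linarith) (by linarith) (by ring)
  obtain ⟨C₃, hC₃, h₃⟩ := exists_sum_pairWeight_le (e := 1 + θ) (α := 2 * θ) (a := 1) (b := 1)
    (by linarith) one_pos one_pos (by linarith) (by linarith) (by linarith) (by ring)
  have key (N M : ℕ) (hM : 1 ≤ M) : ∑ p ∈ ANM N M,
      |(p.1 : ℝ)| ^ (2 * s) * |(p.2.1 : ℝ)| ^ (2 * s) * (p.2.2 : ℝ) ^ 2 /
        (|(p.1 : ℝ)| ^ (2 * s + 1) * |(p.2.1 : ℝ)| ^ (2 * s + 1) * |(p.2.2 : ℝ)| ^ (2 * s + 1))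
      ≤ (2 * C₁ + C₃) * (M : ℝ) ^ (-θ) := by
    have h₁ := h₁ M hM (Icc (-(N : ℤ)) N) (Icc (-(N : ℤ)) N)
    have h₃ := h₃ M hM (Icc (-(N : ℤ)) N) (Icc (-(N : ℤ)) N)
    rw [show 1 - (1 + θ) = -θ by ring] at h₁ h₃
    have hsum := sum_ANM_pairWeight_le N M (2 * θ)
    have hpt : ∀ p ∈ ANM N M, _ ≤ pairWeight 1 1 (2 * θ) (p.1, p.2.1) := fun p hp ↦
      have hp := mem_ANM.1 hp
      wick_summand_le_pairWeight hθs hp.2.1 hp.2.2.1 hp.2.2.2.1 hp.2.2.2.2.1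
    linarith [sum_le_sum hpt]
  refine ⟨2 * C₁ + C₃, by positivity, fun N M hM _ ↦ ⟨fun hs' ↦ ?_, fun hs' ↦ ?_⟩⟩
  · exact (key N M hM).trans_eq (by rw [show θ = s - 1 / 2 from min_eq_left (by linarith)])
  · exact (key N M hM).trans_eq (by rw [show θ = 1 from min_eq_right (by linarith)])
end

section
/- Let s > 1/2. There is a constant C > 0, depending only on s, such that for all integers N > M ≥ 1: Σ_{(n₁,n₂,n₃)∈A_{N,M}} |n₁|^{2s}|n₂|^{s+1}|n₃|^{s+1} / ( |n₁|^{2s+1}|n₂|^{2s+1}|n₃|^{2s+1} ) ≤ C·M^{−(s−1/2)}. -/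
/-!
Write the summand as `|n₁|⁻¹ |n₂|^(-s) |n₃|^(-s)`. Since `n₁ + n₂ + n₃ = 0`, the largest modulus
`h` is the sum of the other two, so the middle one is at least `h / 2`. With `l` the smallest
modulus, the summand is then at most a constant times `h^(-e) l^(-r)` whenever `r < 1`,
`e + r = s + 3/2` and `r ≥ max (1/2) (3/2 - s)`, which is possible because `s > 1/2`.
A triple is determined by `(h, l)` up to 36 choices, and
`∑_{M < h ≤ N} ∑_{l ≤ h} h^(-e) l^(-r) ≲ ∑_{h > M} h^(1 - r - e) ≲ M^(2 - e - r) = M^(1/2 - s)`,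
both one-variable sums being compared with telescoping sums through the mean value theorem.
-/

open Finset Real

theorem add_one_rpow_sub_one_le_div {x p : ℝ} (hx : 0 ≤ x) (hxp : 0 < x ∨ 0 < p)
    (hp : p ≤ 1) (hp0 : p ≠ 0) :
    (x + 1) ^ (p - 1) ≤ ((x + 1) ^ p - x ^ p) / p := by
  obtain ⟨ξ, hξ, hslope⟩ := exists_hasDerivAt_eq_slope (fun y : ℝ => y ^ p)
    (fun y => p * y ^ (p - 1)) (lt_add_one x)
    (fun y hy => (continuousAt_rpow_const y p (by
      rcases hxp with h | h
      · exact Or.inl (by linarith [hy.1])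
      · exact Or.inr h.le)).continuousWithinAt)
    (fun y hy => hasDerivAt_rpow_const (Or.inl (by linarith [hy.1])))
  have hξ0 : 0 < ξ := by linarith [hξ.1]
  rw [add_sub_cancel_left, div_one] at hslope
  rw [← hslope, mul_div_cancel_left₀ _ hp0]
  exact rpow_le_rpow_of_nonpos hξ0 hξ.2.le (by linarith)

theorem sum_Ioc_rpow_sub_one_le {p : ℝ} (hp : p ≤ 1) (hp0 : p ≠ 0) {m n : ℕ}
    (hm : 0 < m ∨ 0 < p) (hmn : m ≤ n) :
    ∑ j ∈ Ioc m n, (j : ℝ) ^ (p - 1) ≤ ((n : ℝ) ^ p - (m : ℝ) ^ p) / p := by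
  induction n, hmn using Nat.le_induction with
  | base => simp
  | succ n hmn ih =>
    have hn : 0 < (n : ℝ) ∨ 0 < p := by
      rcases hm with h | h
      · exact Or.inl (by exact_mod_cast h.trans_le hmn)
      · exact Or.inr h
    rw [sum_Ioc_succ_top hmn, Nat.cast_succ]
    calc _ ≤ ((n : ℝ) ^ p - (m : ℝ) ^ p) / p + (((n : ℝ) + 1) ^ p - (n : ℝ) ^ p) / p :=
          add_le_add ih (add_one_rpow_sub_one_le_div (Nat.cast_nonneg n) hn hp hp0)
      _ = _ := by ring

theorem sum_Ioc_sum_Ioc_rpow_neg_le {e r : ℝ} (hr0 : 0 < r) (hr1 : r < 1) (her : 2 < e + r)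
    {M : ℕ} (hM : 0 < M) (N : ℕ) :
    ∑ k ∈ Ioc M N, ∑ j ∈ Ioc 0 k, (k : ℝ) ^ (-e) * (j : ℝ) ^ (-r)
      ≤ (M : ℝ) ^ (2 - e - r) / ((1 - r) * (e + r - 2)) := by
  have inner : ∀ k ∈ Ioc M N, ∑ j ∈ Ioc 0 k, (k : ℝ) ^ (-e) * (j : ℝ) ^ (-r)
      ≤ (k : ℝ) ^ ((2 - e - r) - 1) / (1 - r) := by
    intro k hk
    have hk : (0 : ℝ) < k := by exact_mod_cast hM.trans (mem_Ioc.1 hk).1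
    have h := sum_Ioc_rpow_sub_one_le (p := 1 - r) (by linarith) (by linarith) (m := 0)
      (Or.inr (by linarith)) (Nat.zero_le k)
    rw [sub_sub_cancel_left, Nat.cast_zero, zero_rpow (by linarith), sub_zero] at h
    rw [← mul_sum]
    calc (k : ℝ) ^ (-e) * ∑ j ∈ Ioc 0 k, (j : ℝ) ^ (-r)
        ≤ (k : ℝ) ^ (-e) * ((k : ℝ) ^ (1 - r) / (1 - r)) := by gcongr
      _ = (k : ℝ) ^ ((2 - e - r) - 1) / (1 - r) := by
        rw [mul_div_assoc', ← rpow_add hk]; ring_nf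
  rcases le_or_gt M N with hMN | hNM
  · have outer := sum_Ioc_rpow_sub_one_le (p := 2 - e - r) (by linarith) (by linarith)
      (Or.inl hM) hMN
    calc _ ≤ ∑ k ∈ Ioc M N, (k : ℝ) ^ ((2 - e - r) - 1) / (1 - r) := sum_le_sum inner
      _ = (∑ k ∈ Ioc M N, (k : ℝ) ^ ((2 - e - r) - 1)) / (1 - r) := by rw [sum_div]
      _ ≤ ((N : ℝ) ^ (2 - e - r) - (M : ℝ) ^ (2 - e - r)) / (2 - e - r) / (1 - r) := by
        gcongr
      _ ≤ _ := by
        rw [div_div, show (2 - e - r) * (1 - r) = -((1 - r) * (e + r - 2)) by ring, div_neg,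
          ← neg_div, neg_sub]
        have : 0 < 1 - r := by linarith
        have : 0 < e + r - 2 := by linarith
        gcongr
        exact sub_le_self _ (by positivity)
  · rw [Ioc_eq_empty (by omega), sum_empty]
    have : 0 < 1 - r := by linarith
    have : 0 < e + r - 2 := by linarith
    positivity

theorem rpow_neg_le_two_rpow_mul_rpow_neg {x y γ : ℝ} (hx : 0 < x) (hxy : x ≤ 2 * y)
    (hγ : 0 ≤ γ) : y ^ (-γ) ≤ 2 ^ γ * x ^ (-γ) :=
  calc y ^ (-γ) ≤ (x / 2) ^ (-γ) :=
        rpow_le_rpow_of_nonpos (by positivity) (by linarith) (by linarith)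
    _ = 2 ^ γ * x ^ (-γ) := by
        rw [div_rpow hx.le zero_le_two, rpow_neg zero_le_two, div_inv_eq_mul, mul_comm]

theorem rpow_neg_mul_rpow_neg_le_s10 {x y α β α' β' : ℝ} (hx : 1 ≤ x) (hxy : x ≤ y)
    (hα : α' ≤ α) (hαβ : α' + β' ≤ α + β) :
    y ^ (-α) * x ^ (-β) ≤ y ^ (-α') * x ^ (-β') := by
  have hx0 : 0 < x := by linarith
  have hy0 : 0 < y := by linarith
  calc y ^ (-α) * x ^ (-β) = y ^ (-α') * (y ^ (-(α - α')) * x ^ (-β)) := by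
        rw [← mul_assoc, ← rpow_add hy0]; ring_nf
    _ ≤ y ^ (-α') * (x ^ (-(α - α')) * x ^ (-β)) := by
        gcongr y ^ (-α') * (?_ * x ^ (-β))
        exact rpow_le_rpow_of_nonpos hx0 hxy (by linarith)
    _ = y ^ (-α') * x ^ (-(α - α' + β)) := by rw [← rpow_add hx0]; ring_nf
    _ ≤ y ^ (-α') * x ^ (-β') := by
        gcongr
        linarith

section Weight

variable {s e r a b c h l : ℝ}

theorem weight_le_of_eq_left (hs : 0 ≤ s) (he : e ≤ 2 * s) (her : e + r ≤ 1 + 2 * s)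
    (hl : 1 ≤ l) (hlh : l ≤ h) (ha : a = l) (hb : h ≤ 2 * b) (hc : h ≤ 2 * c) :
    a ^ (-1 : ℝ) * b ^ (-s) * c ^ (-s) ≤ 4 ^ s * (h ^ (-e) * l ^ (-r)) := by
  subst ha
  have hh : 0 < h := by linarith
  have hc0 : 0 < c := by linarith
  calc a ^ (-1 : ℝ) * b ^ (-s) * c ^ (-s)
      ≤ a ^ (-1 : ℝ) * (2 ^ s * h ^ (-s)) * (2 ^ s * h ^ (-s)) := by
        gcongr _ * ?_ * ?_
        · exact rpow_neg_le_two_rpow_mul_rpow_neg hh hb hs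
        · exact rpow_neg_le_two_rpow_mul_rpow_neg hh hc hs
    _ = 4 ^ s * (h ^ (-(2 * s)) * a ^ (-1 : ℝ)) := by
        rw [show (4 : ℝ) = 2 * 2 by norm_num, mul_rpow zero_le_two zero_le_two, two_mul,
          neg_add, rpow_add hh]
        ring
    _ ≤ 4 ^ s * (h ^ (-e) * a ^ (-r)) :=
        mul_le_mul_of_nonneg_left (rpow_neg_mul_rpow_neg_le_s10 hl hlh he (by linarith)) (by positivity)

theorem weight_le_of_eq_middle (hs : 0 ≤ s) (he : e ≤ 1 + s) (her : e + r ≤ 1 + 2 * s)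
    (hl : 1 ≤ l) (hlh : l ≤ h) (hb : b = l) (ha : h ≤ 2 * a) (hc : h ≤ 2 * c) :
    a ^ (-1 : ℝ) * b ^ (-s) * c ^ (-s) ≤ 2 ^ (1 + s) * (h ^ (-e) * l ^ (-r)) := by
  subst hb
  have hh : 0 < h := by linarith
  have hc0 : 0 < c := by linarith
  calc a ^ (-1 : ℝ) * b ^ (-s) * c ^ (-s)
      ≤ (2 ^ (1 : ℝ) * h ^ (-1 : ℝ)) * b ^ (-s) * (2 ^ s * h ^ (-s)) := by
        gcongr ?_ * _ * ?_
        · exact rpow_neg_le_two_rpow_mul_rpow_neg hh ha zero_le_one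
        · exact rpow_neg_le_two_rpow_mul_rpow_neg hh hc hs
    _ = 2 ^ (1 + s) * (h ^ (-(1 + s)) * b ^ (-s)) := by
        rw [rpow_add zero_lt_two, neg_add, rpow_add hh]
        ring
    _ ≤ 2 ^ (1 + s) * (h ^ (-e) * b ^ (-r)) :=
        mul_le_mul_of_nonneg_left (rpow_neg_mul_rpow_neg_le_s10 hl hlh he (by linarith)) (by positivity)

end Weight

theorem summand_eq_rpow_neg {s x y z : ℝ} (hx : 0 < x) (hy : 0 < y) (hz : 0 < z) :
    x ^ (2 * s) * y ^ (s + 1) * z ^ (s + 1) / (x ^ (2 * s + 1) * y ^ (2 * s + 1) * z ^ (2 * s + 1))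
      = x ^ (-1 : ℝ) * y ^ (-s) * z ^ (-s) := by
  rw [show (-1 : ℝ) = 2 * s - (2 * s + 1) by ring, show -s = (s + 1) - (2 * s + 1) by ring,
    rpow_sub hx, rpow_sub hy, rpow_sub hz]
  ring

theorem sum_comp_le_mul_sum {ι κ R : Type*} [DecidableEq κ] [Semiring R] [PartialOrder R]
    [IsOrderedRing R] {s : Finset ι} {t : Finset κ} {g : ι → κ} {f : κ → R} {n : ℕ}
    (hf : ∀ y ∈ t, 0 ≤ f y) (hg : ∀ x ∈ s, g x ∈ t) (hn : ∀ y ∈ t, #{x ∈ s | g x = y} ≤ n) :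
    ∑ x ∈ s, f (g x) ≤ n * ∑ y ∈ t, f y := by
  rw [← sum_fiberwise_of_maps_to hg, mul_sum]
  refine sum_le_sum fun y hy => ?_
  rw [sum_congr rfl fun x hx => by rw [(mem_filter.1 hx).2], sum_const, nsmul_eq_mul]
  exact mul_le_mul_of_nonneg_right (Nat.mono_cast (hn y hy)) (hf y hy)

def maxAbs (p : ℤ × ℤ × ℤ) : ℕ := max p.1.natAbs (max p.2.1.natAbs p.2.2.natAbs)

def minAbs (p : ℤ × ℤ × ℤ) : ℕ := min p.1.natAbs (min p.2.1.natAbs p.2.2.natAbs)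

theorem mem_ANM_iff {N M : ℕ} {p : ℤ × ℤ × ℤ} :
    p ∈ ANM N M ↔ p.1 ≠ 0 ∧ p.2.1 ≠ 0 ∧ p.2.2 ≠ 0 ∧ p.1 + p.2.1 + p.2.2 = 0 ∧
      M < maxAbs p ∧ maxAbs p ≤ N := by
  simp only [ANM, mem_filter, mem_product, mem_Icc, Int.abs_eq_natAbs, maxAbs]
  omega

theorem card_filter_maxAbs_minAbs_le (s : Finset (ℤ × ℤ × ℤ))
    (hs : ∀ p ∈ s, p.1 + p.2.1 + p.2.2 = 0) (k j : ℕ) :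
    #{p ∈ s | maxAbs p = k ∧ minAbs p = j} ≤ 36 := by
  -- `p` is determined by `(p.1, p.2.1)`, and every coordinate is `±k`, `±j` or `±(k - j)`.
  set S : Finset ℤ := {(k : ℤ), -(k : ℤ), (j : ℤ), -(j : ℤ), (k : ℤ) - j, (j : ℤ) - k}
  have hS : #(S ×ˢ S) ≤ 36 := by
    rw [card_product]
    exact Nat.mul_le_mul (card_le_six (α := ℤ)) card_le_six
  refine le_trans (card_le_card_of_injOn (fun p => (p.1, p.2.1)) ?_ ?_) hS
  · intro p hp
    simp only [coe_filter, Set.mem_ofPred_eq] at hp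
    obtain ⟨hp0, hk, hj⟩ := hp
    have := hs p hp0
    simp only [maxAbs, minAbs] at hk hj
    simp only [coe_product, Set.mem_prod, mem_coe, S, mem_insert, mem_singleton]
    omega
  · intro p hp q hq hpq
    simp only [coe_filter, Set.mem_ofPred_eq, Prod.mk.injEq] at hp hq hpq
    have := hs p hp.1
    have := hs q hq.1
    ext <;> omega

theorem weight_le_maxAbs_minAbs {s e r : ℝ} (hs : 0 ≤ s) (he₁ : e ≤ 2 * s) (he₂ : e ≤ 1 + s)
    (her : e + r ≤ 1 + 2 * s) {p : ℤ × ℤ × ℤ} (h₁ : p.1 ≠ 0) (h₂ : p.2.1 ≠ 0) (h₃ : p.2.2 ≠ 0)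
    (hsum : p.1 + p.2.1 + p.2.2 = 0) :
    |(p.1 : ℝ)| ^ (-1 : ℝ) * |(p.2.1 : ℝ)| ^ (-s) * |(p.2.2 : ℝ)| ^ (-s)
      ≤ (4 ^ s + 2 ^ (1 + s)) * ((maxAbs p : ℝ) ^ (-e) * (minAbs p : ℝ) ^ (-r)) := by
  simp only [← Int.cast_abs, ← Nat.cast_natAbs]
  have hl : (1 : ℝ) ≤ minAbs p := by
    have : 1 ≤ minAbs p := by simp only [minAbs]; omega
    exact_mod_cast this
  have hlh : (minAbs p : ℝ) ≤ maxAbs p := by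
    have : minAbs p ≤ maxAbs p := by simp only [minAbs, maxAbs]; omega
    exact_mod_cast this
  have hW : (0 : ℝ) ≤ (maxAbs p : ℝ) ^ (-e) * (minAbs p : ℝ) ^ (-r) := by positivity
  have hcases :
      (p.1.natAbs = minAbs p ∧ maxAbs p ≤ 2 * p.2.1.natAbs ∧ maxAbs p ≤ 2 * p.2.2.natAbs) ∨
      (p.2.1.natAbs = minAbs p ∧ maxAbs p ≤ 2 * p.1.natAbs ∧ maxAbs p ≤ 2 * p.2.2.natAbs) ∨
      (p.2.2.natAbs = minAbs p ∧ maxAbs p ≤ 2 * p.1.natAbs ∧ maxAbs p ≤ 2 * p.2.1.natAbs) := by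
    simp only [minAbs, maxAbs]; omega
  have h4 : (4 : ℝ) ^ s ≤ 4 ^ s + 2 ^ (1 + s) := le_add_of_nonneg_right (by positivity)
  have h2 : (2 : ℝ) ^ (1 + s) ≤ 4 ^ s + 2 ^ (1 + s) := le_add_of_nonneg_left (by positivity)
  rcases hcases with ⟨ha, hb, hc⟩ | ⟨hb, ha, hc⟩ | ⟨hc, ha, hb⟩
  · refine (weight_le_of_eq_left hs he₁ her hl hlh (a := p.1.natAbs) (b := p.2.1.natAbs)
      (c := p.2.2.natAbs) (by exact_mod_cast ha) (by exact_mod_cast hb)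
      (by exact_mod_cast hc)).trans ?_
    exact mul_le_mul_of_nonneg_right h4 hW
  · refine (weight_le_of_eq_middle hs he₂ her hl hlh (a := p.1.natAbs) (b := p.2.1.natAbs)
      (c := p.2.2.natAbs) (by exact_mod_cast hb) (by exact_mod_cast ha)
      (by exact_mod_cast hc)).trans ?_
    exact mul_le_mul_of_nonneg_right h2 hW
  · rw [mul_right_comm]
    refine (weight_le_of_eq_middle hs he₂ her hl hlh (a := p.1.natAbs) (b := p.2.2.natAbs)
      (c := p.2.1.natAbs) (by exact_mod_cast hc) (by exact_mod_cast ha)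
      (by exact_mod_cast hb)).trans ?_
    exact mul_le_mul_of_nonneg_right h2 hW

theorem sum_ANM_rpow_maxAbs_mul_rpow_minAbs_le {e r : ℝ} (hr0 : 0 < r) (hr1 : r < 1)
    (her : 2 < e + r) {N M : ℕ} (hM : 0 < M) :
    ∑ p ∈ ANM N M, (maxAbs p : ℝ) ^ (-e) * (minAbs p : ℝ) ^ (-r)
      ≤ 36 * ((M : ℝ) ^ (2 - e - r) / ((1 - r) * (e + r - 2))) := by
  let t := (Ioc M N).sigma fun k => Ioc 0 k
  have maps : ∀ p ∈ ANM N M, (⟨maxAbs p, minAbs p⟩ : Σ _ : ℕ, ℕ) ∈ t := by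
    intro p hp
    have := mem_ANM_iff.1 hp
    simp only [t, mem_sigma, mem_Ioc]
    simp only [minAbs, maxAbs] at this ⊢
    omega
  have fibers : ∀ y ∈ t, #{p ∈ ANM N M | (⟨maxAbs p, minAbs p⟩ : Σ _ : ℕ, ℕ) = y} ≤ 36 := by
    rintro ⟨k, j⟩ -
    simp only [Sigma.mk.injEq, heq_eq_eq]
    exact card_filter_maxAbs_minAbs_le _ (fun p hp => (mem_ANM_iff.1 hp).2.2.2.1) k j
  calc _ ≤ 36 * ∑ y ∈ t, (y.1 : ℝ) ^ (-e) * (y.2 : ℝ) ^ (-r) :=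
        sum_comp_le_mul_sum (f := fun y : Σ _ : ℕ, ℕ => (y.1 : ℝ) ^ (-e) * (y.2 : ℝ) ^ (-r))
          (fun _ _ => by positivity) maps fibers
    _ = 36 * ∑ k ∈ Ioc M N, ∑ j ∈ Ioc 0 k, (k : ℝ) ^ (-e) * (j : ℝ) ^ (-r) := by
        rw [sum_sigma]
    _ ≤ _ := by
        gcongr
        exact sum_Ioc_sum_Ioc_rpow_neg_le hr0 hr1 her hM N

/-- Estimate on the Wick sum with weight `|n₁|^{2s}|n₂|^{s+1}|n₃|^{s+1}`. -/
theorem statement10 (s : ℝ) (hs : 1 / 2 < s) :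
    ∃ C > 0, ∀ N M : ℕ, 1 ≤ M → M < N →
      ∑ p ∈ ANM N M,
          |(p.1 : ℝ)| ^ (2 * s) * |(p.2.1 : ℝ)| ^ (s + 1) * |(p.2.2 : ℝ)| ^ (s + 1) /
            (|(p.1 : ℝ)| ^ (2 * s + 1) * |(p.2.1 : ℝ)| ^ (2 * s + 1) *
              |(p.2.2 : ℝ)| ^ (2 * s + 1))
        ≤ C * (M : ℝ) ^ (-(s - 1 / 2)) := by
  set r : ℝ := max (3 / 4) (3 / 2 - s)
  set e : ℝ := 3 / 2 + s - r with he
  have hr0 : 0 < r := lt_max_of_lt_left (by norm_num)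
  have hr1 : r < 1 := max_lt (by norm_num) (by linarith)
  have hr₁ : 3 / 4 ≤ r := le_max_left _ _
  have hr₂ : 3 / 2 - s ≤ r := le_max_right _ _
  have her : e + r = 3 / 2 + s := by rw [he]; ring
  set K : ℝ := 4 ^ s + 2 ^ (1 + s)
  have hK : 0 < K := by positivity
  refine ⟨K * (36 * (1 / ((1 - r) * (s - 1 / 2)))),
    by have := sub_pos.2 hr1; have := sub_pos.2 hs; positivity, fun N M hM _ => ?_⟩
  have habs : ∀ {n : ℤ}, n ≠ 0 → 0 < |(n : ℝ)| := fun hn => abs_pos.2 (Int.cast_ne_zero.2 hn)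
  calc _ = ∑ p ∈ ANM N M, |(p.1 : ℝ)| ^ (-1 : ℝ) * |(p.2.1 : ℝ)| ^ (-s) * |(p.2.2 : ℝ)| ^ (-s) :=
        sum_congr rfl fun p hp => by
          obtain ⟨h₁, h₂, h₃, -⟩ := mem_ANM_iff.1 hp
          exact summand_eq_rpow_neg (habs h₁) (habs h₂) (habs h₃)
    _ ≤ ∑ p ∈ ANM N M, K * ((maxAbs p : ℝ) ^ (-e) * (minAbs p : ℝ) ^ (-r)) :=
        sum_le_sum fun p hp => by
          obtain ⟨h₁, h₂, h₃, hsum, -⟩ := mem_ANM_iff.1 hp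
          exact weight_le_maxAbs_minAbs (by linarith) (by linarith) (by linarith) (by linarith)
            h₁ h₂ h₃ hsum
    _ ≤ K * (36 * ((M : ℝ) ^ (2 - e - r) / ((1 - r) * (e + r - 2)))) := by
        rw [← mul_sum]
        gcongr
        exact sum_ANM_rpow_maxAbs_mul_rpow_minAbs_le hr0 hr1 (by linarith) hM
    _ = _ := by
        rw [show 2 - e - r = -(s - 1 / 2) by linarith, show e + r - 2 = s - 1 / 2 by linarith]
        ring
end

section
/- Let s > 1, κ > 0 and R > 0, and set a := 4κs/(2s−1) and b := 2/(2s−1). There are constants C, c, K > 0, depending only on s and κ, such that for every integer N ≥ 2 and every t ≥ K·(ln N)^{2/κ}: P( { ‖P_N u‖_{H^{s}} ≥ t^{κ} } ∩ { 𝓔(u) ≤ R } ) ≤ C·exp( −c·t^{a}/R^{b} ). -/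
open MeasureTheory ProbabilityTheory Real

/-- The complex Gaussian coefficients `g_n = (h_n + i l_n)/√2` for `n ≥ 1`
and `g_{-n} = conj g_n`, built from the real families `h, l` (where `h k`
represents `h_{k+1}`). -/
noncomputable def gcoef {Ω : Type*} (h l : ℕ → Ω → ℝ) (n : ℤ) (ω : Ω) : ℂ :=
  if 0 < n then ((h (n - 1).toNat ω : ℂ) + Complex.I * (l (n - 1).toNat ω : ℂ)) / (Real.sqrt 2 : ℂ)
  else (starRingEnd ℂ)
    (((h (-n - 1).toNat ω : ℂ) + Complex.I * (l (-n - 1).toNat ω : ℂ)) / (Real.sqrt 2 : ℂ))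

/-- The random Fourier coefficients `û(n) = g_n / |n|^{s+1/2}`. -/
noncomputable def ucoef {Ω : Type*} (s : ℝ) (h l : ℕ → Ω → ℝ) (n : ℤ) (ω : Ω) : ℂ :=
  gcoef h l n ω / ((|(n : ℝ)| ^ (s + 1 / 2) : ℝ) : ℂ)

/-- The truncated Sobolev norm `‖P_N u‖_{H^σ} = (Σ_{n=1}^N n^{2σ}|û(n)|²)^{1/2}`. -/
noncomputable def HsN {Ω : Type*} (s σ : ℝ) (h l : ℕ → Ω → ℝ) (N : ℕ) (ω : Ω) : ℝ :=
  Real.sqrt (∑ n ∈ Finset.Icc 1 N, (n : ℝ) ^ (2 * σ) * ‖ucoef s h l (n : ℤ) ω‖ ^ 2)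

/-- The conserved energy `𝓔(u)` with `𝓔(u)² = 4π Σ_{n≥1} (1+n)|û(n)|²`. -/
noncomputable def energ {Ω : Type*} (s : ℝ) (h l : ℕ → Ω → ℝ) (ω : Ω) : ℝ :=
  Real.sqrt (4 * π * ∑' n : ℕ, ((n : ℝ) + 2) * ‖ucoef s h l ((n : ℤ) + 1) ω‖ ^ 2)

/-!
Write `x_k = |û(k+1)|²`. For `k < m` we have `(k+1)^{2s} x_k ≤ m^{2s-1} (k+2) x_k`, so on
`{𝓔(u) ≤ R}` the modes below `m = ⌊(2π t^{2κ}/R²)^{1/(2s-1)}⌋` carry at most half of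
`‖P_N u‖²_{H^s} ≥ t^{2κ}`. The other half sits on `m ≤ k < N`, where
`(k+1)^{2s} x_k = (h_k² + l_k²)/(2(k+1))` is a sum of independent squared Gaussians with weights
at most `1/(2(m+1))`. A Chernoff bound at parameter `(m+1)/2`, with
`E exp(c X²) = (1-2c)^{-1/2} ≤ e^{2c}` for `c ≤ 1/4` and `∑ 1/(k+1) ≤ 1 + log N`, gives
`exp(-(m+1)(t^{2κ}/4 - 1 - log N))`. Once `t^{2κ} ≥ 8(1 + log N)` this is at most
`exp(-(m+1) t^{2κ}/8) ≤ exp(-t^a/(8 R^b))`, since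
`(m+1) t^{2κ} ≥ (t^{2κ}/R²)^{1/(2s-1)} t^{2κ} = t^a/R^b`.
-/

-- For `c ≥ 1 / 2` both sides are junk `0`: `integral_gaussian` gives `√(π / b) = 0` for `b ≤ 0`.
lemma integral_exp_mul_sq_gaussianReal (c : ℝ) :
    ∫ x, exp (c * x ^ 2) ∂gaussianReal 0 1 = (√(1 - 2 * c))⁻¹ := by
  have hpdf : ∀ x : ℝ, gaussianPDFReal 0 1 x • exp (c * x ^ 2)
      = (√(2 * π))⁻¹ * exp (-(1 / 2 - c) * x ^ 2) := by
    intro x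
    rw [gaussianPDFReal, smul_eq_mul, mul_assoc, ← exp_add]
    push_cast
    ring_nf
  rw [integral_gaussianReal_eq_integral_smul one_ne_zero]
  simp_rw [hpdf]
  rw [integral_const_mul, integral_gaussian, ← sqrt_inv, ← sqrt_mul (by positivity), ← sqrt_inv]
  congr 1
  field_simp

lemma integrable_exp_mul_sq_gaussianReal {c : ℝ} (hc : c < 1 / 2) :
    Integrable (fun x => exp (c * x ^ 2)) (gaussianReal 0 1) := by
  refine Integrable.of_integral_ne_zero ?_
  rw [integral_exp_mul_sq_gaussianReal]
  exact (inv_pos.2 (sqrt_pos.2 (by linarith))).ne'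

lemma exp_neg_two_mul_le_one_sub {u : ℝ} (h0 : 0 ≤ u) (h1 : u ≤ 1 / 2) :
    exp (-(2 * u)) ≤ 1 - u := by
  rw [exp_neg, inv_le_comm₀ (exp_pos _) (by linarith)]
  calc (1 - u)⁻¹ ≤ 1 + 2 * u := by
        rw [inv_le_iff_one_le_mul₀ (by linarith)]
        nlinarith
    _ ≤ exp (2 * u) := by linarith [add_one_le_exp (2 * u)]

lemma inv_sqrt_one_sub_two_mul_le_exp {c : ℝ} (h0 : 0 ≤ c) (h1 : c ≤ 1 / 4) :
    (√(1 - 2 * c))⁻¹ ≤ exp (2 * c) := by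
  rw [inv_le_comm₀ (sqrt_pos.2 (by linarith)) (exp_pos _), ← exp_neg,
    le_sqrt (exp_pos _).le (by linarith), ← exp_nat_mul]
  convert exp_neg_two_mul_le_one_sub (u := 2 * c) (by linarith) (by linarith) using 2
  push_cast
  ring

lemma lintegral_sq_gaussianReal : ∫⁻ x, ENNReal.ofReal (x ^ 2) ∂gaussianReal 0 1 = 1 := by
  have h := variance_id_gaussianReal (μ := 0) (v := 1)
  rw [variance_eq_integral aemeasurable_id] at h
  have h2 : ∫ x, x ^ 2 ∂gaussianReal 0 1 = 1 := by simpa [integral_id_gaussianReal] using h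
  rw [← ofReal_integral_eq_lintegral_ofReal (f := fun x => x ^ 2)
    (memLp_id_gaussianReal 2).integrable_sq (ae_of_all _ fun x => sq_nonneg x), h2,
    ENNReal.ofReal_one]

section GaussianFamily

variable {Ω ι : Type*} [MeasurableSpace Ω] {P : Measure Ω} {Z : ι → Ω → ℝ}

lemma aemeasurable_of_map_eq_gaussianReal {Y : Ω → ℝ} {μ : ℝ} {v : NNReal}
    (hY : P.map Y = gaussianReal μ v) : AEMeasurable Y P :=
  .of_map_ne_zero (by rw [hY]; exact IsProbabilityMeasure.ne_zero _)

lemma mgf_mul_sq_le_of_map_eq_gaussianReal {Y : Ω → ℝ} (hY : P.map Y = gaussianReal 0 1)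
    {c : ℝ} (h0 : 0 ≤ c) (h1 : c ≤ 1 / 4) :
    Integrable (fun ω => exp (c * Y ω ^ 2)) P ∧ mgf (fun ω => Y ω ^ 2) P c ≤ exp (2 * c) := by
  have hYm := aemeasurable_of_map_eq_gaussianReal hY
  have hf : AEStronglyMeasurable (fun x : ℝ => exp (c * x ^ 2)) (P.map Y) := by fun_prop
  refine ⟨?_, ?_⟩
  · refine (integrable_map_measure hf hYm).1 ?_
    rw [hY]
    exact integrable_exp_mul_sq_gaussianReal (by linarith)
  · rw [mgf, ← integral_map hYm hf, hY, integral_exp_mul_sq_gaussianReal]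
    exact inv_sqrt_one_sub_two_mul_le_exp h0 h1

theorem measureReal_le_sum_mul_sq_le [IsProbabilityMeasure P] (hindep : iIndepFun Z P)
    (hZ : ∀ i, P.map (Z i) = gaussianReal 0 1) (S : Finset ι) {w : ι → ℝ}
    (hw : ∀ i ∈ S, 0 ≤ w i) {t : ℝ} (ht : 0 ≤ t) (htw : ∀ i ∈ S, t * w i ≤ 1 / 4) (a : ℝ) :
    P.real {ω | a ≤ ∑ i ∈ S, w i * Z i ω ^ 2} ≤ exp (-t * a + 2 * t * ∑ i ∈ S, w i) := by
  set X : ι → Ω → ℝ := fun i ω => w i * Z i ω ^ 2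
  have hXm : ∀ i, AEMeasurable (X i) P := fun i =>
    ((aemeasurable_of_map_eq_gaussianReal (hZ i)).pow_const 2).const_mul _
  have hXindep : iIndepFun X P :=
    hindep.comp (fun i x => w i * x ^ 2) fun i => by fun_prop
  have hmgf : ∀ i ∈ S, Integrable (fun ω => exp (t * X i ω)) P ∧
      mgf (X i) P t ≤ exp (2 * (t * w i)) := fun i hi => by
    have := mgf_mul_sq_le_of_map_eq_gaussianReal (hZ i) (mul_nonneg ht (hw i hi)) (htw i hi)
    simpa only [mgf, X, ← mul_assoc] using this
  have hsum : mgf (∑ i ∈ S, X i) P t ≤ exp (2 * t * ∑ i ∈ S, w i) := by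
    rw [hXindep.mgf_sum₀ hXm, Finset.mul_sum, exp_sum]
    refine Finset.prod_le_prod (fun i _ => mgf_nonneg) fun i hi => ?_
    rw [mul_assoc]
    exact (hmgf i hi).2
  -- The `Z i` are only a.e. measurable; integrability is read off from the positive mgf.
  have hint : Integrable (fun ω => exp (t * (∑ i ∈ S, X i) ω)) P := by
    refine mgf_pos_iff.1 ?_
    rw [hXindep.mgf_sum₀ hXm]
    exact Finset.prod_pos fun i hi => mgf_pos (hmgf i hi).1
  calc P.real {ω | a ≤ ∑ i ∈ S, w i * Z i ω ^ 2}
      = P.real {ω | a ≤ (∑ i ∈ S, X i) ω} := by simp only [Finset.sum_apply, X]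
    _ ≤ exp (-t * a) * mgf (∑ i ∈ S, X i) P t := measure_ge_le_exp_mul_mgf a ht hint
    _ ≤ exp (-t * a) * exp (2 * t * ∑ i ∈ S, w i) := by gcongr
    _ = exp (-t * a + 2 * t * ∑ i ∈ S, w i) := (exp_add _ _).symm

lemma ae_summable_mul_sq [Countable ι] (hZ : ∀ i, P.map (Z i) = gaussianReal 0 1) {q : ι → ℝ}
    (hq0 : ∀ i, 0 ≤ q i) (hq : Summable q) : ∀ᵐ ω ∂P, Summable fun i => q i * Z i ω ^ 2 := by
  have hZm := fun i => aemeasurable_of_map_eq_gaussianReal (hZ i)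
  have hmeas : ∀ i, AEMeasurable (fun ω => ENNReal.ofReal (q i * Z i ω ^ 2)) P := fun i => by
    fun_prop
  have hfin : ∫⁻ ω, ∑' i, ENNReal.ofReal (q i * Z i ω ^ 2) ∂P ≠ ⊤ := by
    rw [lintegral_tsum hmeas]
    have hi : ∀ i, ∫⁻ ω, ENNReal.ofReal (q i * Z i ω ^ 2) ∂P = ENNReal.ofReal (q i) := fun i => by
      simp_rw [ENNReal.ofReal_mul (hq0 i)]
      have hmap := lintegral_map' (f := fun x => ENNReal.ofReal (x ^ 2)) (by fun_prop) (hZm i)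
      rw [hZ i, lintegral_sq_gaussianReal] at hmap
      rw [lintegral_const_mul'' _ (by fun_prop), ← hmap, mul_one]
    simp_rw [hi]
    rw [← ENNReal.ofReal_tsum_of_nonneg hq0 hq]
    exact ENNReal.ofReal_ne_top
  filter_upwards [ae_lt_top' (AEMeasurable.tsum hmeas) hfin] with ω hω
  exact (ENNReal.summable_toReal hω.ne).congr fun i =>
    ENNReal.toReal_ofReal (mul_nonneg (hq0 i) (sq_nonneg _))

end GaussianFamily

section Frequencies

variable {x : ℕ → ℝ} {s : ℝ}

lemma sum_range_rpow_mul_le_mul_tsum (hx : ∀ k, 0 ≤ x k) (hs : 1 / 2 ≤ s)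
    (hsum : Summable fun k : ℕ => ((k : ℝ) + 2) * x k) (m : ℕ) :
    ∑ k ∈ Finset.range m, ((k : ℝ) + 1) ^ (2 * s) * x k
      ≤ (m : ℝ) ^ (2 * s - 1) * ∑' k : ℕ, ((k : ℝ) + 2) * x k := by
  have hterm : ∀ k ∈ Finset.range m,
      ((k : ℝ) + 1) ^ (2 * s) * x k ≤ (m : ℝ) ^ (2 * s - 1) * (((k : ℝ) + 2) * x k) := by
    intro k hk
    have hkm : (k : ℝ) + 1 ≤ m := by exact_mod_cast Finset.mem_range.1 hk
    rw [← mul_assoc]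
    refine mul_le_mul_of_nonneg_right ?_ (hx k)
    calc ((k : ℝ) + 1) ^ (2 * s) = ((k : ℝ) + 1) ^ (2 * s - 1) * ((k : ℝ) + 1) := by
          rw [rpow_sub_one (by positivity), div_mul_cancel₀ _ (by positivity)]
      _ ≤ (m : ℝ) ^ (2 * s - 1) * ((k : ℝ) + 2) := by
          gcongr
          · linarith
          · linarith
  calc ∑ k ∈ Finset.range m, ((k : ℝ) + 1) ^ (2 * s) * x k
      ≤ ∑ k ∈ Finset.range m, (m : ℝ) ^ (2 * s - 1) * (((k : ℝ) + 2) * x k) :=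
        Finset.sum_le_sum hterm
    _ ≤ (m : ℝ) ^ (2 * s - 1) * ∑' k : ℕ, ((k : ℝ) + 2) * x k := by
        rw [← Finset.mul_sum]
        gcongr
        exact hsum.sum_le_tsum _ fun k _ => mul_nonneg (by positivity) (hx k)

lemma half_le_sum_Ico_of_le_sum_range (hx : ∀ k, 0 ≤ x k) (hs : 1 / 2 ≤ s)
    (hsum : Summable fun k : ℕ => ((k : ℝ) + 2) * x k) {E τ : ℝ}
    (hE : ∑' k : ℕ, ((k : ℝ) + 2) * x k ≤ E) {m N : ℕ} (hm : (m : ℝ) ^ (2 * s - 1) * E ≤ τ / 2)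
    (hN : τ ≤ ∑ k ∈ Finset.range N, ((k : ℝ) + 1) ^ (2 * s) * x k) :
    τ / 2 ≤ ∑ k ∈ Finset.Ico m N, ((k : ℝ) + 1) ^ (2 * s) * x k := by
  set f : ℕ → ℝ := fun k => ((k : ℝ) + 1) ^ (2 * s) * x k
  have hf : ∀ k, 0 ≤ f k := fun k => mul_nonneg (by positivity) (hx k)
  have hlow : ∑ k ∈ Finset.range m, f k ≤ τ / 2 :=
    (sum_range_rpow_mul_le_mul_tsum hx hs hsum m).trans
      ((mul_le_mul_of_nonneg_left hE (by positivity)).trans hm)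
  have hsplit : ∑ k ∈ Finset.range N, f k
      ≤ ∑ k ∈ Finset.range m, f k + ∑ k ∈ Finset.Ico m N, f k := by
    rcases le_total m N with hmN | hNm
    · exact (Finset.sum_range_add_sum_Ico f hmN).ge
    · rw [Finset.Ico_eq_empty_of_le hNm, Finset.sum_empty, add_zero]
      exact Finset.sum_le_sum_of_subset_of_nonneg (Finset.range_subset_range.2 hNm)
        fun k _ _ => hf k
  linarith

end Frequencies

section Model

variable {Ω : Type*} {s : ℝ} {h l : ℕ → Ω → ℝ}

lemma norm_ucoef_natCast_add_one_sq (k : ℕ) (ω : Ω) :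
    ‖ucoef s h l ((k : ℤ) + 1) ω‖ ^ 2
      = (h k ω ^ 2 + l k ω ^ 2) / (2 * ((k : ℝ) + 1) ^ (2 * s + 1)) := by
  have hk : (0 : ℝ) ≤ (k : ℝ) + 1 := by positivity
  have hg : ‖((h k ω : ℂ) + Complex.I * (l k ω : ℂ)) / (√2 : ℂ)‖ ^ 2
      = (h k ω ^ 2 + l k ω ^ 2) / 2 := by
    rw [norm_div, div_pow, mul_comm Complex.I, Complex.norm_add_mul_I, Complex.norm_real,
      norm_of_nonneg (sqrt_nonneg 2), sq_sqrt (by positivity), sq_sqrt (by norm_num)]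
  have hw : ‖((|(((k : ℤ) + 1 : ℤ) : ℝ)| ^ (s + 1 / 2) : ℝ) : ℂ)‖ ^ 2
      = ((k : ℝ) + 1) ^ (2 * s + 1) := by
    rw [Complex.norm_real, norm_of_nonneg (by positivity), ← rpow_natCast,
      ← rpow_mul (abs_nonneg _)]
    push_cast
    rw [abs_of_nonneg hk]
    ring_nf
  rw [ucoef, gcoef, if_pos (by omega), norm_div, div_pow, hw]
  simp only [add_sub_cancel_right, Int.toNat_natCast, hg]
  rw [div_div]

lemma HsN_eq_sqrt_sum_range (σ : ℝ) (N : ℕ) (ω : Ω) :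
    HsN s σ h l N ω
      = √(∑ k ∈ Finset.range N, ((k : ℝ) + 1) ^ (2 * σ) * ‖ucoef s h l ((k : ℤ) + 1) ω‖ ^ 2) := by
  rw [HsN, ← Finset.Ico_add_one_right_eq_Icc, Finset.sum_Ico_eq_sum_range, add_tsub_cancel_right]
  push_cast
  simp only [add_comm (1 : ℝ), add_comm (1 : ℤ)]

lemma rpow_mul_norm_ucoef_sq (k : ℕ) (ω : Ω) :
    ((k : ℝ) + 1) ^ (2 * s) * ‖ucoef s h l ((k : ℤ) + 1) ω‖ ^ 2
      = (2 * ((k : ℝ) + 1))⁻¹ * h k ω ^ 2 + (2 * ((k : ℝ) + 1))⁻¹ * l k ω ^ 2 := by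
  have hk : (0 : ℝ) < (k : ℝ) + 1 := by positivity
  rw [norm_ucoef_natCast_add_one_sq, rpow_add hk, rpow_one]
  field_simp

lemma add_two_mul_norm_ucoef_sq (k : ℕ) (ω : Ω) :
    ((k : ℝ) + 2) * ‖ucoef s h l ((k : ℤ) + 1) ω‖ ^ 2
      = ((k : ℝ) + 2) / (2 * ((k : ℝ) + 1) ^ (2 * s + 1)) * h k ω ^ 2
        + ((k : ℝ) + 2) / (2 * ((k : ℝ) + 1) ^ (2 * s + 1)) * l k ω ^ 2 := by
  rw [norm_ucoef_natCast_add_one_sq]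
  ring

lemma summable_add_two_div_rpow (hs : 1 / 2 < s) :
    Summable fun k : ℕ => ((k : ℝ) + 2) / (2 * ((k : ℝ) + 1) ^ (2 * s + 1)) := by
  have hmaj : Summable fun k : ℕ => ((k : ℝ) + 1) ^ (-(2 * s)) := by
    have h := (summable_nat_rpow (p := -(2 * s))).2 (by linarith)
    exact ((summable_nat_add_iff 1).2 h).congr fun k => by push_cast; rfl
  refine hmaj.of_nonneg_of_le (fun k => by positivity) fun k => ?_
  have hk : (0 : ℝ) < (k : ℝ) + 1 := by positivity
  rw [rpow_neg hk.le, rpow_add hk, rpow_one, div_le_iff₀ (by positivity)]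
  field_simp
  linarith

end Model

section Tail

variable {Ω : Type*} {s R τ : ℝ} {h l : ℕ → Ω → ℝ}

lemma half_le_sum_Ico_of_le_HsN_sq_of_energ_le (hs : 1 / 2 < s) (hR : 0 < R) (hτ : 0 ≤ τ)
    {N : ℕ} {ω : Ω}
    (hsum : Summable fun k : ℕ => ((k : ℝ) + 2) * ‖ucoef s h l ((k : ℤ) + 1) ω‖ ^ 2)
    (hH : τ ≤ HsN s s h l N ω ^ 2) (hE : energ s h l ω ≤ R) :
    τ / 2 ≤ ∑ k ∈ Finset.Ico ⌊(2 * π * τ / R ^ 2) ^ (2 * s - 1)⁻¹⌋₊ N,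
      ((k : ℝ) + 1) ^ (2 * s) * ‖ucoef s h l ((k : ℤ) + 1) ω‖ ^ 2 := by
  refine half_le_sum_Ico_of_le_sum_range (fun k => sq_nonneg _) hs.le hsum
    (E := R ^ 2 / (4 * π)) ?_ ?_ ?_
  · rw [le_div_iff₀ (by positivity), mul_comm]
    exact (sqrt_le_left (by positivity)).1 hE
  · have hm : (⌊(2 * π * τ / R ^ 2) ^ (2 * s - 1)⁻¹⌋₊ : ℝ) ^ (2 * s - 1)
        ≤ 2 * π * τ / R ^ 2 := by
      calc _ ≤ ((2 * π * τ / R ^ 2) ^ (2 * s - 1)⁻¹) ^ (2 * s - 1) := by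
            gcongr
            · linarith
            · exact Nat.floor_le (by positivity)
        _ = 2 * π * τ / R ^ 2 := rpow_inv_rpow (by positivity) (by linarith)
    calc _ ≤ 2 * π * τ / R ^ 2 * (R ^ 2 / (4 * π)) := by gcongr
      _ = τ / 2 := by field_simp; ring
  · rwa [HsN_eq_sqrt_sum_range, sq_sqrt (Finset.sum_nonneg fun k _ => by positivity)] at hH

lemma ae_summable_add_two_mul_norm_ucoef_sq [MeasurableSpace Ω] {P : Measure Ω}
    (hs : 1 / 2 < s) (hgauss : ∀ i : ℕ ⊕ ℕ, P.map (Sum.elim h l i) = gaussianReal 0 1) :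
    ∀ᵐ ω ∂P, Summable fun k : ℕ => ((k : ℝ) + 2) * ‖ucoef s h l ((k : ℤ) + 1) ω‖ ^ 2 := by
  have hq := summable_add_two_div_rpow hs
  have hq0 : ∀ k : ℕ, 0 ≤ ((k : ℝ) + 2) / (2 * ((k : ℝ) + 1) ^ (2 * s + 1)) :=
    fun k => by positivity
  filter_upwards [ae_summable_mul_sq (fun k => hgauss (.inl k)) hq0 hq,
    ae_summable_mul_sq (fun k => hgauss (.inr k)) hq0 hq] with ω hh hl
  simp_rw [add_two_mul_norm_ucoef_sq]
  exact hh.add hl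

lemma sum_Ico_inv_add_one_le_one_add_log (m N : ℕ) :
    ∑ k ∈ Finset.Ico m N, ((k : ℝ) + 1)⁻¹ ≤ 1 + log N := by
  calc _ ≤ ∑ k ∈ Finset.range N, ((k : ℝ) + 1)⁻¹ :=
        Finset.sum_le_sum_of_subset_of_nonneg
          (fun k hk => Finset.mem_range.2 (Finset.mem_Ico.1 hk).2) fun k _ _ => by positivity
    _ ≤ 1 + log N := by
        have := harmonic_le_one_add_log N
        rw [harmonic] at this
        push_cast at this
        exact this

theorem measureReal_le_HsN_sq_inter_energ_le [MeasurableSpace Ω] (P : Measure Ω)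
    [IsProbabilityMeasure P] (hs : 1 / 2 < s) (hR : 0 < R) (hτ : 0 ≤ τ)
    (hindep : iIndepFun (Sum.elim h l) P)
    (hgauss : ∀ i : ℕ ⊕ ℕ, P.map (Sum.elim h l i) = gaussianReal 0 1) (N : ℕ) :
    P.real ({ω | τ ≤ HsN s s h l N ω ^ 2} ∩ {ω | energ s h l ω ≤ R})
      ≤ exp (-(((⌊(2 * π * τ / R ^ 2) ^ (2 * s - 1)⁻¹⌋₊ : ℝ) + 1) * (τ / 4 - (1 + log N)))) := by
  set m := ⌊(2 * π * τ / R ^ 2) ^ (2 * s - 1)⁻¹⌋₊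
  set w : ℕ → ℝ := fun k => (2 * ((k : ℝ) + 1))⁻¹
  set S := (Finset.Ico m N).disjSum (Finset.Ico m N)
  have hsubset : ({ω | τ ≤ HsN s s h l N ω ^ 2} ∩ {ω | energ s h l ω ≤ R} : Set Ω)
      ≤ᵐ[P] {ω | τ / 2 ≤ ∑ i ∈ S, Sum.elim w w i * Sum.elim h l i ω ^ 2} := by
    -- Off the summability set `∑'` is junk `0`, and `energ ≤ R` would say nothing.
    filter_upwards [ae_summable_add_two_mul_norm_ucoef_sq hs hgauss] with ω hω ⟨hH, hE⟩
    have := half_le_sum_Ico_of_le_HsN_sq_of_energ_le hs hR hτ hω hH hE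
    simp_rw [rpow_mul_norm_ucoef_sq, Finset.sum_add_distrib] at this
    show τ / 2 ≤ ∑ i ∈ S, Sum.elim w w i * Sum.elim h l i ω ^ 2
    simpa only [S, Finset.sum_disjSum, Sum.elim_inl, Sum.elim_inr] using this
  have hw0 : ∀ i ∈ S, 0 ≤ Sum.elim w w i := by
    rintro (k | k) _ <;> simp only [Sum.elim_inl, Sum.elim_inr, w] <;> positivity
  have hw : ∀ i ∈ S, ((m : ℝ) + 1) / 2 * Sum.elim w w i ≤ 1 / 4 := by
    have key : ∀ k ∈ Finset.Ico m N, ((m : ℝ) + 1) / 2 * w k ≤ 1 / 4 := fun k hk => by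
      have hmk : (m : ℝ) ≤ k := by exact_mod_cast (Finset.mem_Ico.1 hk).1
      simp only [w]
      field_simp
      linarith
    rintro (k | k) hk <;>
      simp only [S, Finset.inl_mem_disjSum, Finset.inr_mem_disjSum, Sum.elim_inl,
        Sum.elim_inr] at hk ⊢ <;> exact key k hk
  have hsumw : ∑ i ∈ S, Sum.elim w w i ≤ 1 + log N := by
    simp only [S, Finset.sum_disjSum, Sum.elim_inl, Sum.elim_inr, ← Finset.sum_add_distrib, w]
    convert sum_Ico_inv_add_one_le_one_add_log m N using 3
    field_simp
    ring
  calc _ ≤ P.real {ω | τ / 2 ≤ ∑ i ∈ S, Sum.elim w w i * Sum.elim h l i ω ^ 2} :=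
        ENNReal.toReal_mono (measure_ne_top _ _) (measure_mono_ae hsubset)
    _ ≤ exp (-(((m : ℝ) + 1) / 2) * (τ / 2)
          + 2 * (((m : ℝ) + 1) / 2) * ∑ i ∈ S, Sum.elim w w i) :=
        measureReal_le_sum_mul_sq_le hindep hgauss S hw0 (by positivity) hw _
    _ ≤ _ := by
        have := mul_le_mul_of_nonneg_left hsumw (by positivity : (0 : ℝ) ≤ (m : ℝ) + 1)
        gcongr exp ?_
        linarith

end Tail

lemma eight_mul_one_add_log_le_rpow {κ : ℝ} (hκ : 0 < κ) {N : ℕ} (hN : 2 ≤ N) {t : ℝ}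
    (ht : exp (10 / κ) * log N ^ (2 / κ) ≤ t) : 8 * (1 + log N) ≤ t ^ (2 * κ) := by
  have hL : 0.6931 ≤ log N := by
    linarith [log_two_gt_d9, log_le_log (by norm_num) (by exact_mod_cast hN : (2 : ℝ) ≤ N)]
  have hpow : (exp (10 / κ) * log N ^ (2 / κ)) ^ (2 * κ) = exp 20 * log N ^ 4 := by
    rw [mul_rpow (exp_pos _).le (by positivity), ← exp_mul, ← rpow_mul (by linarith)]
    rw [show 10 / κ * (2 * κ) = 20 by field_simp; ring, show 2 / κ * (2 * κ) = (4 : ℕ) by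
      field_simp; norm_num, rpow_natCast]
  have hexp : (221 : ℝ) ≤ exp 20 := by
    have := quadratic_le_exp_of_nonneg (x := 20) (by norm_num)
    norm_num at this
    linarith
  have hL4 : 8 * (1 + log N) ≤ 221 * log N ^ 4 := by
    nlinarith [pow_le_pow_left₀ (by norm_num) hL 3]
  calc 8 * (1 + log N) ≤ exp 20 * log N ^ 4 := hL4.trans (by gcongr)
    _ = (exp (10 / κ) * log N ^ (2 / κ)) ^ (2 * κ) := hpow.symm
    _ ≤ t ^ (2 * κ) := by gcongr

lemma rpow_div_rpow_eq_rpow_div_mul {s κ t R : ℝ} (hs : 1 / 2 < s) (ht : 0 < t) (hR : 0 < R) :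
    t ^ (4 * κ * s / (2 * s - 1)) / R ^ (2 / (2 * s - 1))
      = (t ^ (2 * κ) / R ^ 2) ^ (2 * s - 1)⁻¹ * t ^ (2 * κ) := by
  have hs' : 2 * s - 1 ≠ 0 := by linarith
  rw [div_rpow (by positivity) (by positivity), ← rpow_natCast R 2, ← rpow_mul ht.le,
    ← rpow_mul hR.le, div_mul_eq_mul_div, ← rpow_add ht]
  congr 2
  rw [div_eq_mul_inv]
  linear_combination 2 * κ * mul_inv_cancel₀ hs'

lemma one_div_eight_mul_rpow_div_rpow_le {s κ t R L : ℝ} (hs : 1 / 2 < s) (ht : 0 < t)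
    (hR : 0 < R) (hL : 8 * (1 + L) ≤ t ^ (2 * κ)) :
    1 / 8 * t ^ (4 * κ * s / (2 * s - 1)) / R ^ (2 / (2 * s - 1))
      ≤ ((⌊(2 * π * t ^ (2 * κ) / R ^ 2) ^ (2 * s - 1)⁻¹⌋₊ : ℝ) + 1)
        * (t ^ (2 * κ) / 4 - (1 + L)) := by
  set τ := t ^ (2 * κ)
  have hτ : 0 < τ := by positivity
  have hm : (τ / R ^ 2) ^ (2 * s - 1)⁻¹ ≤ (⌊(2 * π * τ / R ^ 2) ^ (2 * s - 1)⁻¹⌋₊ : ℝ) + 1 := by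
    refine le_trans ?_ (Nat.lt_floor_add_one _).le
    gcongr
    · exact inv_nonneg.2 (by linarith)
    · nlinarith [pi_gt_three]
  rw [mul_div_assoc, rpow_div_rpow_eq_rpow_div_mul hs ht hR]
  nlinarith [mul_le_mul_of_nonneg_right hm hτ.le]

/-- Tail bound for `‖P_N u‖_{H^s}` on the energy ball `{𝓔(u) ≤ R}`, for
`t ≥ K (ln N)^{2/κ}`, with `a = 4κs/(2s−1)` and `b = 2/(2s−1)`. -/
theorem statement17 (s : ℝ) (hs : 1 < s) (κ : ℝ) (hκ : 0 < κ) (R : ℝ) (hR : 0 < R)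
    {Ω : Type*} [MeasurableSpace Ω] (P : Measure Ω) [IsProbabilityMeasure P]
    (h l : ℕ → Ω → ℝ)
    (hindep : iIndepFun (Sum.elim h l) P)
    (hgauss : ∀ i : ℕ ⊕ ℕ, Measure.map (Sum.elim h l i) P = gaussianReal 0 1) :
    ∃ C > 0, ∃ c > 0, ∃ K > 0, ∀ N : ℕ, 2 ≤ N → ∀ t : ℝ,
      K * Real.log N ^ (2 / κ) ≤ t →
      (P ({ω | t ^ κ ≤ HsN s s h l N ω} ∩ {ω | energ s h l ω ≤ R})).toReal
        ≤ C * Real.exp (-(c * t ^ (4 * κ * s / (2 * s - 1)) / R ^ (2 / (2 * s - 1)))) := by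
  refine ⟨1, one_pos, 1 / 8, by norm_num, exp (10 / κ), exp_pos _, fun N hN t ht => ?_⟩
  have hlog : 0 < log N := log_pos (by exact_mod_cast hN)
  have ht0 : 0 < t := lt_of_lt_of_le (by positivity) ht
  have hsq : {ω | t ^ κ ≤ HsN s s h l N ω} ⊆ {ω | t ^ (2 * κ) ≤ HsN s s h l N ω ^ 2} :=
    fun ω (hω : t ^ κ ≤ HsN s s h l N ω) => show t ^ (2 * κ) ≤ HsN s s h l N ω ^ 2 by
      rw [mul_comm, rpow_mul ht0.le, rpow_two]
      exact pow_le_pow_left₀ (by positivity) hω 2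
  calc (P ({ω | t ^ κ ≤ HsN s s h l N ω} ∩ {ω | energ s h l ω ≤ R})).toReal
      ≤ P.real ({ω | t ^ (2 * κ) ≤ HsN s s h l N ω ^ 2} ∩ {ω | energ s h l ω ≤ R}) :=
        measureReal_mono (Set.inter_subset_inter_left _ hsq)
    _ ≤ _ :=
        measureReal_le_HsN_sq_inter_energ_le P (by linarith) hR (by positivity) hindep hgauss N
    _ ≤ _ := by
        rw [one_mul, exp_le_exp, neg_le_neg_iff]
        exact one_div_eight_mul_rpow_div_rpow_le (by linarith) ht0 hR
          (eight_mul_one_add_log_le_rpow hκ hN ht)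
end
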